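/- arXiv:2312.09687 — 15 statements merged into one kernel-verified Lean document; each statement's English description precedes it below -/
import Mathlib

section
/- Let X be a finite set with |X| ≥ 3 and let λ, ρ : X → X be commuting bijections; define r : X × X → X × X by r(x,y) = (λ(y), ρ(x)) (a Lyubashenko solution, which is automatically a non-degenerate set-theoretic solution of the Yang–Baxter equation). Then (X,r) is a simple solution if and only if |X| = p for some prime p and the subgroup of Sym(X) generated by λ and ρ is cyclic of order p. -/
/-- The map `r × id` on `X × X × X`. -/
def r12 {X : Type} (r : X × X → X × X) : X × X × X → X × X × X :=
  fun p => ((r (p.1, p.2.1)).1, (r (p.1, p.2.1)).2, p.2.2)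

/-- The map `id × r` on `X × X × X`. -/
def r23 {X : Type} (r : X × X → X × X) : X × X × X → X × X × X :=
  fun p => (p.1, r p.2)

/-- `r` satisfies the braid equation, i.e. `(X, r)` is a set-theoretic solution of the
Yang--Baxter equation. -/
def IsBraided {X : Type} (r : X × X → X × X) : Prop :=
  (r12 r) ∘ (r23 r) ∘ (r12 r) = (r23 r) ∘ (r12 r) ∘ (r23 r)

/-- The map `λ_x`, where `r (x, y) = (λ_x y, ρ_y x)`. -/
def lambdaMap {X : Type} (r : X × X → X × X) (x : X) : X → X := fun y => (r (x, y)).1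

/-- The map `ρ_y`, where `r (x, y) = (λ_x y, ρ_y x)`. -/
def rhoMap {X : Type} (r : X × X → X × X) (y : X) : X → X := fun x => (r (x, y)).2

/-- A solution is non-degenerate if all `λ_x` and all `ρ_y` are bijective. -/
def Nondegenerate {X : Type} (r : X × X → X × X) : Prop :=
  (∀ x, Function.Bijective (lambdaMap r x)) ∧ (∀ y, Function.Bijective (rhoMap r y))

/-- A homomorphism of solutions `f : (X, r) → (Y, s)`: `(f × f) ∘ r = s ∘ (f × f)`. -/
def IsSolHom {X Y : Type} (r : X × X → X × X) (s : Y × Y → Y × Y) (f : X → Y) : Prop :=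
  ∀ x y : X, Prod.map f f (r (x, y)) = s (f x, f y)

/-- A solution `(X, r)` is simple if `|X| ≥ 2` and every epimorphism of solutions from
`(X, r)` is either bijective or has image of cardinality `1`. -/
def SimpleSolution (X : Type) (r : X × X → X × X) : Prop :=
  2 ≤ Nat.card X ∧
  ∀ (Y : Type) (s : Y × Y → Y × Y) (f : X → Y),
    IsBraided s → Function.Surjective f → IsSolHom r s f →
    Function.Bijective f ∨ Nat.card Y = 1

/-- The derived map `σ_y (x) = λ_y (ρ_{λ_x⁻¹ y} (x))` of a non-degenerate solution. -/
noncomputable def sigmaMap {X : Type} [Nonempty X] (r : X × X → X × X) (y x : X) : X :=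
  lambdaMap r y (rhoMap r (Function.invFun (lambdaMap r x) y) x)

/-- The diagonal map `q (x) = λ_x⁻¹ (x)` of a non-degenerate solution. -/
noncomputable def diagMap {X : Type} [Nonempty X] (r : X × X → X × X) (x : X) : X :=
  Function.invFun (lambdaMap r x) x

/-- A non-degenerate solution is irretractable if `λ_x = λ_y` and `ρ_x = ρ_y` imply `x = y`. -/
def Irretractable {X : Type} (r : X × X → X × X) : Prop :=
  ∀ x y : X, lambdaMap r x = lambdaMap r y → rhoMap r x = rhoMap r y → x = y

/-- A solution is decomposable if `X` is a disjoint union of two non-empty invariant subsets. -/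
def Decomposable {X : Type} (r : X × X → X × X) : Prop :=
  ∃ Y Z : Set X, Y.Nonempty ∧ Z.Nonempty ∧ Disjoint Y Z ∧ Y ∪ Z = Set.univ ∧
    (∀ x y, x ∈ Y → y ∈ Y → (r (x, y)).1 ∈ Y ∧ (r (x, y)).2 ∈ Y) ∧
    (∀ x y, x ∈ Z → y ∈ Z → (r (x, y)).1 ∈ Z ∧ (r (x, y)).2 ∈ Z)


section Aux

open Function

lemma braided_of_comm {Y : Type} (a b : Y → Y) (h : ∀ y, a (b y) = b (a y)) :
    IsBraided (fun p : Y × Y => (a p.2, b p.1)) := by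
  unfold IsBraided
  funext p
  simp [r12, r23, h]

/-- A setoid whose relation is the orbit relation of a subgroup of permutations. -/
def orbSetoid {X : Type} (H : Subgroup (Equiv.Perm X)) : Setoid X where
  r x y := ∃ g ∈ H, g x = y
  iseqv := by
    refine ⟨fun x => ⟨1, H.one_mem, rfl⟩, ?_, ?_⟩
    · rintro x y ⟨g, hg, rfl⟩
      exact ⟨g⁻¹, H.inv_mem hg, by simp⟩
    · rintro x y z ⟨g, hg, rfl⟩ ⟨g', hg', rfl⟩
      exact ⟨g' * g, H.mul_mem hg' hg, by simp [Equiv.Perm.mul_apply]⟩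

lemma orb_inv {X : Type} (H : Subgroup (Equiv.Perm X)) (u : Equiv.Perm X)
    (hc : ∀ g ∈ H, u * g = g * u) :
    ∀ x y, (orbSetoid H).r x y → (orbSetoid H).r (u x) (u y) := by
  rintro x y ⟨g, hg, rfl⟩
  refine ⟨g, hg, ?_⟩
  have h1 : (g * u) x = (u * g) x := by rw [hc g hg]
  simpa [Equiv.Perm.mul_apply] using h1

lemma quot_dichotomy {X : Type} (lam rho : Equiv.Perm X)
    (hcomm : lam * rho = rho * lam)
    (r : X × X → X × X) (hr : ∀ x y : X, r (x, y) = (lam y, rho x))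
    (hs : SimpleSolution X r)
    (e : Setoid X)
    (hl : ∀ x y, e.r x y → e.r (lam x) (lam y))
    (hrh : ∀ x y, e.r x y → e.r (rho x) (rho y)) :
    (∀ x y, e.r x y → x = y) ∨ (∀ x y, e.r x y) := by
  have hpt : ∀ x, lam (rho x) = rho (lam x) := fun x => by
    have h1 : (lam * rho) x = (rho * lam) x := by rw [hcomm]
    simpa [Equiv.Perm.mul_apply] using h1
  let lam' : Quotient e → Quotient e := Quotient.map lam hl
  let rho' : Quotient e → Quotient e := Quotient.map rho hrh
  have hcomm' : ∀ u, lam' (rho' u) = rho' (lam' u) := by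
    intro u
    induction u using Quotient.ind with
    | _ x => simp [lam', rho', Quotient.map_mk, hpt]
  set s : Quotient e × Quotient e → Quotient e × Quotient e :=
    fun p => (lam' p.2, rho' p.1) with hsdef
  have hbr : IsBraided s := braided_of_comm lam' rho' hcomm'
  have hsurj : Function.Surjective (Quotient.mk e) := Quotient.mk_surjective
  have hhom : IsSolHom r s (Quotient.mk e) := by
    intro x y
    simp [hr, hsdef, lam', rho', Quotient.map_mk, Prod.map]
  rcases hs.2 (Quotient e) s (Quotient.mk e) hbr hsurj hhom with hb | h1
  · left
    intro x y hxy
    exact hb.1 (Quotient.sound hxy)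
  · right
    intro x y
    have hss : Subsingleton (Quotient e) := (Nat.card_eq_one_iff_unique.mp h1).1
    exact Quotient.exact (Subsingleton.elim _ _)

lemma exists_induced {X Y : Type} (f : X → Y) (hf : Function.Surjective f) (g : X → X)
    (hwd : ∀ x y, f x = f y → f (g x) = f (g y)) :
    ∃ g' : Y → Y, f ∘ g = g' ∘ f := by
  refine ⟨fun v => f (g (Function.surjInv hf v)), funext fun x => ?_⟩
  exact hwd x (Function.surjInv hf (f x)) (Function.surjInv_eq hf (f x)).symm

end Aux

/-- A Lyubashenko solution on a finite set with at least 3 elements is simple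
iff its cardinality is a prime `p` and the group generated by `λ` and `ρ` is cyclic of
order `p`. -/
theorem stmt_0 {X : Type} [Fintype X] (hX : 3 ≤ Fintype.card X)
    (lam rho : Equiv.Perm X) (hcomm : lam * rho = rho * lam)
    (r : X × X → X × X) (hr : ∀ x y : X, r (x, y) = (lam y, rho x)) :
    SimpleSolution X r ↔
      ∃ p : ℕ, p.Prime ∧ Fintype.card X = p ∧
        IsCyclic (Subgroup.closure ({lam, rho} : Set (Equiv.Perm X))) ∧
        Nat.card (Subgroup.closure ({lam, rho} : Set (Equiv.Perm X))) = p := by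
  classical
  set G := Subgroup.closure ({lam, rho} : Set (Equiv.Perm X)) with hG
  have hlamG : lam ∈ G := Subgroup.subset_closure (by simp)
  have hrhoG : rho ∈ G := Subgroup.subset_closure (by simp)
  have hab : ∀ g ∈ G, ∀ h ∈ G, g * h = h * g := by
    have h1 : G ≤ Subgroup.centralizer {lam, rho} := by
      rw [hG, Subgroup.closure_le]
      intro x hx
      rw [SetLike.mem_coe, Subgroup.mem_centralizer_iff]
      intro y hy
      simp only [Set.mem_insert_iff, Set.mem_singleton_iff] at hx hy
      rcases hx with rfl | rfl <;> rcases hy with rfl | rfl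
      · rfl
      · exact hcomm.symm
      · exact hcomm
      · rfl
    intro g hg h hh
    have h2 : G ≤ Subgroup.centralizer {h} := by
      rw [hG, Subgroup.closure_le]
      intro x hx
      rw [SetLike.mem_coe, Subgroup.mem_centralizer_iff]
      intro y hy
      rw [Set.mem_singleton_iff] at hy
      subst hy
      exact (Subgroup.mem_centralizer_iff.mp (h1 hh) x hx).symm
    exact (Subgroup.mem_centralizer_iff.mp (h2 hg) h rfl).symm
  have hXpos : 0 < Fintype.card X := by omega
  obtain ⟨x₀⟩ : Nonempty X := Fintype.card_pos_iff.mp hXpos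
  constructor
  · -- forward direction
    intro hs
    have key : ∀ H : Subgroup (Equiv.Perm X), H ≤ G →
        (∀ x y, (orbSetoid H).r x y → x = y) ∨ (∀ x y, (orbSetoid H).r x y) :=
      fun H hH => quot_dichotomy lam rho hcomm r hr hs (orbSetoid H)
        (orb_inv H lam (fun g hg => hab lam hlamG g (hH hg)))
        (orb_inv H rho (fun g hg => hab rho hrhoG g (hH hg)))
    -- Step 1 : G is transitive
    have htrans : ∀ x y : X, ∃ g ∈ G, g x = y := by
      rcases key G le_rfl with hfix | htr
      · exfalso
        have hlam1 : lam = 1 := Equiv.ext fun x => (hfix x (lam x) ⟨lam, hlamG, rfl⟩).symm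
        have hrho1 : rho = 1 := Equiv.ext fun x => (hfix x (rho x) ⟨rho, hrhoG, rfl⟩).symm
        obtain ⟨b, hb⟩ := Fintype.exists_ne_of_one_lt_card (by omega) x₀
        set f : X → Bool := fun x => if x = x₀ then true else false with hfdef
        have hsurj : Function.Surjective f := by
          intro v
          cases v
          · exact ⟨b, if_neg hb⟩
          · exact ⟨x₀, if_pos rfl⟩
        have hbr : IsBraided (fun p : Bool × Bool => (p.2, p.1)) := by
          have := braided_of_comm (id : Bool → Bool) id (fun _ => rfl)
          simpa using this
        have hhom : IsSolHom r (fun p : Bool × Bool => (p.2, p.1)) f := by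
          intro x y
          simp [hr, hlam1, hrho1, Prod.map]
        rcases hs.2 Bool _ f hbr hsurj hhom with hbij | h1
        · have hc2 := Fintype.card_of_bijective hbij
          simp [Fintype.card_bool] at hc2
          omega
        · simp [Nat.card_eq_fintype_card] at h1
      · exact fun x y => htr x y
    -- Step 2 : G acts regularly, so |G| = |X|
    have hstab : ∀ g ∈ G, g x₀ = x₀ → g = 1 := by
      intro g hg hgx
      apply Equiv.ext
      intro y
      obtain ⟨h, hh, hhy⟩ := htrans x₀ y
      have h1 : g y = (g * h) x₀ := by simp [Equiv.Perm.mul_apply, hhy]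
      have h2 : (h * g) x₀ = y := by simp [Equiv.Perm.mul_apply, hgx, hhy]
      rw [Equiv.Perm.one_apply, h1, hab g hg h hh, h2]
    have hφ : Function.Bijective (fun g : ↥G => (g : Equiv.Perm X) x₀) := by
      constructor
      · rintro ⟨g, hg⟩ ⟨h, hh⟩ hgh
        simp only at hgh
        have hx : (h⁻¹ * g) x₀ = x₀ := by
          simp [Equiv.Perm.mul_apply, hgh]
        have h1 := hstab _ (G.mul_mem (G.inv_mem hh) hg) hx
        have h2 : h = g := inv_mul_eq_one.mp h1
        exact Subtype.ext h2.symm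
      · intro y
        obtain ⟨g, hg, hgy⟩ := htrans x₀ y
        exact ⟨⟨g, hg⟩, hgy⟩
    have hGcard : Nat.card ↥G = Fintype.card X := by
      rw [← Nat.card_eq_fintype_card]
      exact Nat.card_eq_of_bijective _ hφ
    -- Step 3 : |X| is prime
    set n := Fintype.card X with hn
    set q := n.minFac with hqdef
    have hq : q.Prime := Nat.minFac_prime (by omega)
    haveI : Fact q.Prime := ⟨hq⟩
    haveI : Finite (Equiv.Perm X) := by infer_instance
    haveI : Fintype ↥G := Fintype.ofFinite _
    have hdvd : q ∣ Fintype.card ↥G := by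
      rw [← Nat.card_eq_fintype_card, hGcard]
      exact Nat.minFac_dvd n
    obtain ⟨τ, hτ⟩ := exists_prime_orderOf_dvd_card q hdvd
    set t : Equiv.Perm X := (τ : Equiv.Perm X) with htdef
    have htG : t ∈ G := SetLike.coe_mem τ
    have hordt : orderOf t = q := by
      rw [← hτ]
      exact orderOf_injective G.subtype (Subgroup.subtype_injective G) τ
    rcases key (Subgroup.zpowers t) (Subgroup.zpowers_le.mpr htG) with hfix | htr2
    · exfalso
      have ht1 : t = 1 :=
        Equiv.ext fun x => (hfix x (t x) ⟨t, Subgroup.mem_zpowers t, rfl⟩).symm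
      rw [ht1, orderOf_one] at hordt
      exact hq.one_lt.ne' hordt.symm
    · have hψ : Function.Surjective (fun i : Fin q => (t ^ (i : ℕ)) x₀) := by
        intro y
        obtain ⟨g, hg, hgy⟩ := htr2 x₀ y
        obtain ⟨k, hk⟩ := Subgroup.mem_zpowers_iff.mp hg
        have hq0 : ((q : ℤ)) ≠ 0 := by
          exact_mod_cast hq.pos.ne'
        have hqz : (0:ℤ) < (q:ℤ) := by exact_mod_cast hq.pos
        have hnn := Int.emod_nonneg k hq0
        have hlt := Int.emod_lt_of_pos k hqz
        refine ⟨⟨(k % (q : ℤ)).toNat, by omega⟩, ?_⟩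
        have hpow : t ^ (((k % (q : ℤ)).toNat : ℕ)) = t ^ k := by
          rw [← zpow_natCast, Int.toNat_of_nonneg hnn, ← hordt]
          exact zpow_mod_orderOf t k
        simp only []
        rw [hpow, hk]
        exact hgy
      have hcle : n ≤ q := by
        have h1 := Fintype.card_le_of_surjective _ hψ
        simpa using h1
      have hqle : q ≤ n := Nat.minFac_le (by omega)
      have hnq : n = q := le_antisymm hcle hqle
      refine ⟨q, hq, hnq, ?_, by rw [hGcard]; exact hnq⟩
      exact isCyclic_of_prime_card (p := q) (by rw [hGcard]; exact hnq)
  · -- backward direction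
    rintro ⟨p, hp, hcardX, hcyc, hcardG⟩
    refine ⟨by rw [Nat.card_eq_fintype_card]; omega, ?_⟩
    intro Y s f hbrs hfsurj hhom
    haveI : Finite Y := Finite.of_surjective f hfsurj
    haveI : Fintype Y := Fintype.ofFinite Y
    -- induced maps exist for lam and rho
    have hwd_lam : ∀ x y, f x = f y → f (lam x) = f (lam y) := by
      intro x y hxy
      have h1 := hhom x₀ x
      have h2 := hhom x₀ y
      rw [hr] at h1 h2
      have e1 : f (lam x) = (s (f x₀, f x)).1 := by
        have := congrArg Prod.fst h1
        simpa [Prod.map] using this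
      have e2 : f (lam y) = (s (f x₀, f y)).1 := by
        have := congrArg Prod.fst h2
        simpa [Prod.map] using this
      rw [hxy] at e1
      exact e1.trans e2.symm
    have hwd_rho : ∀ x y, f x = f y → f (rho x) = f (rho y) := by
      intro x y hxy
      have h1 := hhom x x₀
      have h2 := hhom y x₀
      rw [hr] at h1 h2
      have e1 : f (rho x) = (s (f x, f x₀)).2 := by
        have := congrArg Prod.snd h1
        simpa [Prod.map] using this
      have e2 : f (rho y) = (s (f y, f x₀)).2 := by
        have := congrArg Prod.snd h2
        simpa [Prod.map] using this
      rw [hxy] at e1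
      exact e1.trans e2.symm
    -- the set of permutations admitting an induced map is a subgroup
    set S : Subgroup (Equiv.Perm X) :=
      { carrier := {g : Equiv.Perm X | ∃ g' : Y → Y, f ∘ ⇑g = g' ∘ f}
        one_mem' := ⟨id, rfl⟩
        mul_mem' := by
          rintro a b ⟨a', ha⟩ ⟨b', hb⟩
          refine ⟨a' ∘ b', funext fun x => ?_⟩
          have hax := congrFun ha (b x)
          have hbx := congrFun hb x
          simp only [Function.comp_apply] at hax hbx
          show f ((a * b) x) = a' (b' (f x))
          rw [Equiv.Perm.mul_apply, hax, hbx]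
        inv_mem' := by
          rintro a ⟨a', ha⟩
          have hsur : Function.Surjective a' := by
            intro v
            obtain ⟨x, rfl⟩ := hfsurj v
            refine ⟨f (a⁻¹ x), ?_⟩
            have h1 := congrFun ha (a⁻¹ x)
            simp only [Function.comp_apply] at h1
            rw [← h1, show a (a⁻¹ x) = x from a.apply_symm_apply x]
          have hbij : Function.Bijective a' :=
            ⟨Finite.injective_iff_surjective.mpr hsur, hsur⟩
          refine ⟨(Equiv.ofBijective a' hbij).symm, funext fun x => ?_⟩
          apply (Equiv.ofBijective a' hbij).injective
          simp only [Function.comp_apply, Equiv.apply_symm_apply]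
          have h1 := congrFun ha (a⁻¹ x)
          simp only [Function.comp_apply] at h1
          show a' (f (a⁻¹ x)) = f x
          rw [← h1, show a (a⁻¹ x) = x from a.apply_symm_apply x] } with hSdef
    have hGS : G ≤ S := by
      rw [hG, Subgroup.closure_le]
      intro g hg
      simp only [Set.mem_insert_iff, Set.mem_singleton_iff] at hg
      rcases hg with rfl | rfl
      · exact exists_induced f hfsurj _ hwd_lam
      · exact exists_induced f hfsurj _ hwd_rho
    -- G is transitive on X
    haveI : Fintype ↥G := Fintype.ofFinite _
    obtain ⟨σ, hσ⟩ := hcyc.exists_generator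
    have hordσ : orderOf σ = p := by
      rw [orderOf_eq_card_of_forall_mem_zpowers hσ, hcardG]
    have hordt : orderOf ((σ : Equiv.Perm X)) = p := by
      rw [← hordσ]
      exact orderOf_injective G.subtype (Subgroup.subtype_injective G) σ
    set t : Equiv.Perm X := (σ : Equiv.Perm X) with htdef
    have htcyc : t.IsCycle := by
      apply Equiv.Perm.isCycle_of_prime_order (by rw [hordt]; exact hp)
      have h1 : t.support.card ≤ Fintype.card X := Finset.card_le_univ _
      have h2 := hp.pos
      rw [hordt]
      omega
    have hsupp : t.support = Finset.univ := by
      apply Finset.eq_univ_of_card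
      rw [← htcyc.orderOf, hordt, hcardX]
    have hmoves : ∀ y : X, t y ≠ y := fun y => by
      have : y ∈ t.support := hsupp ▸ Finset.mem_univ y
      exact Equiv.Perm.mem_support.mp this
    obtain ⟨x₁, hx₁, hall⟩ := htcyc
    have htrans : ∀ x y : X, ∃ g ∈ G, g x = y := by
      intro x y
      obtain ⟨k, hk⟩ := ((hall (hmoves x)).symm.trans (hall (hmoves y)))
      exact ⟨t ^ k, Subgroup.zpow_mem G (SetLike.coe_mem σ) k, hk⟩
    -- all fibers of f have the same cardinality
    have hle : ∀ v w : Y, Fintype.card {x // f x = v} ≤ Fintype.card {x // f x = w} := by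
      intro v w
      obtain ⟨x, rfl⟩ := hfsurj v
      obtain ⟨y, rfl⟩ := hfsurj w
      obtain ⟨g, hgG, hgxy⟩ := htrans x y
      obtain ⟨g', hg'⟩ := hGS hgG
      have hmapfib : ∀ z : {x' // f x' = f x}, f (g z.1) = f y := by
        rintro ⟨z, hz⟩
        have h1 := congrFun hg' z
        have h2 := congrFun hg' x
        simp only [Function.comp_apply] at h1 h2
        rw [h1, hz, ← h2, hgxy]
      refine Fintype.card_le_of_injective (fun z => ⟨g z.1, hmapfib z⟩) ?_
      intro z1 z2 h
      exact Subtype.ext (g.injective (Subtype.mk_eq_mk.mp h))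
    have hfib : ∀ v w : Y, Fintype.card {x // f x = v} = Fintype.card {x // f x = w} :=
      fun v w => le_antisymm (hle v w) (hle w v)
    set d := Fintype.card {x // f x = f x₀} with hddef
    have hsum : Fintype.card X = Fintype.card Y * d := by
      rw [Fintype.card_congr (Equiv.sigmaFiberEquiv f).symm, Fintype.card_sigma]
      calc (∑ v : Y, Fintype.card {x // f x = v})
          = ∑ _v : Y, d := Finset.sum_congr rfl (fun v _ => hfib v (f x₀))
        _ = Fintype.card Y * d := by
            rw [Finset.sum_const, smul_eq_mul, Finset.card_univ]
    have hppd : p = Fintype.card Y * d := by rw [← hcardX]; exact hsum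
    rcases hp.eq_one_or_self_of_dvd (Fintype.card Y) ⟨d, hppd⟩ with hY1 | hYp
    · right
      rw [Nat.card_eq_fintype_card]
      exact hY1
    · left
      have hd1 : d = 1 := by
        rw [hYp] at hppd
        have h2 := hp.pos
        nlinarith
      refine ⟨fun a b hab2 => ?_, hfsurj⟩
      haveI : Subsingleton {x // f x = f b} :=
        Fintype.card_le_one_iff_subsingleton.mp (by rw [hfib (f b) (f x₀), ← hddef, hd1])
      have h3 : (⟨a, hab2⟩ : {x // f x = f b}) = ⟨b, rfl⟩ := Subsingleton.elim _ _
      exact Subtype.mk_eq_mk.mp h3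
end

section
/- Let (X,r) be a finite non-degenerate set-theoretic solution of the Yang–Baxter equation with |X| ≥ 2, and let (X,r') be its left derived solution. If (X,r') is a simple solution, then (X,r) is a simple solution. -/
/-- Abstract rack identity: if `L`, `P`, `σ` satisfy the three componentwise
Yang–Baxter identities, each `L a` is surjective, and `σ (L a b) a = L (L a b) (P b a)`,
then `σ` satisfies the rack identity. -/
lemma rack_abstract {X : Type} (L P : X → X → X) (σ : X → X → X)
    (hL : ∀ a, Function.Surjective (L a))
    (hA : ∀ a b w, L (L a b) (L (P b a) w) = L a (L b w))
    (hB : ∀ a b w, P (L (P b a) w) (L a b) = L (P (L b w) a) (P w b))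
    (hC : ∀ a b w, P w (P b a) = P (P w b) (P (L b w) a))
    (hσ : ∀ a b, σ (L a b) a = L (L a b) (P b a)) :
    ∀ x y z, σ z (σ y x) = σ (σ z y) (σ z x) := by
  have key : ∀ x u c, σ (L x (L u c)) (σ (L x u) x)
      = σ (σ (L x (L u c)) (L x u)) (σ (L x (L u c)) x) := by
    intro x u c
    obtain ⟨w, hw⟩ := hL (P c (P u x)) (P c (P u x))
    have hw2 : L (P (P c u) (P (L u c) x)) w = P (P c u) (P (L u c) x) := by
      rw [← hC x u c]; exact hw
    have lhs : σ (L x (L u c)) (σ (L x u) x) = L x (L u (L c w)) := by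
      rw [hσ x u, ← hA x u c, ← hA (L x u) (P u x) c,
        hσ (L (L x u) (P u x)) (L (P (P u x) (L x u)) c),
        hB (L x u) (P u x) c, hA (L x u) (P u x) c,
        hA (L x u) (L (P u x) c) (P c (P u x)), ← hw,
        hA (P u x) c w]
      exact hA x u (L c w)
    have e2 : σ (L x (L u c)) x = L (L x (L u c)) (P (L u c) x) := hσ x (L u c)
    have e3 : σ (L x (L u c)) (L x u)
        = L (L x (L u c)) (L (P (L u c) x) (P c u)) := by
      rw [← hA x u c, hσ (L x u) (L (P u x) c), hB x u c]
    have rhs : σ (σ (L x (L u c)) (L x u)) (σ (L x (L u c)) x)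
        = L x (L u (L c w)) := by
      rw [e3, e2, ← hA (L x (L u c)) (P (L u c) x) (P c u),
        hσ (L (L x (L u c)) (P (L u c) x))
          (L (P (P (L u c) x) (L x (L u c))) (P c u)),
        hB (L x (L u c)) (P (L u c) x) (P c u),
        hA (L x (L u c)) (P (L u c) x) (P c u),
        hA (L x (L u c)) (L (P (L u c) x) (P c u)) (P (P c u) (P (L u c) x)),
        ← hw2, hA (P (L u c) x) (P c u) w,
        hA x (L u c) (L (P c u) w), hA u c w]
    rw [lhs, rhs]
  intro x y z
  obtain ⟨u, hu⟩ := hL x y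
  obtain ⟨v, hv⟩ := hL y z
  obtain ⟨c, hc⟩ := hL (P u x) v
  have hz : z = L x (L u c) := by rw [← hv, ← hc, ← hu, hA]
  rw [hz, ← hu]
  exact key x u c

lemma yb_comp1 {X : Type} {r : X × X → X × X} (hBr : IsBraided r) (a b w : X) :
    lambdaMap r (lambdaMap r a b) (lambdaMap r (rhoMap r b a) w)
      = lambdaMap r a (lambdaMap r b w) :=
  congrArg (fun q : X × X × X => q.1) (congrFun hBr (a, b, w))

lemma yb_comp2 {X : Type} {r : X × X → X × X} (hBr : IsBraided r) (a b w : X) :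
    rhoMap r (lambdaMap r (rhoMap r b a) w) (lambdaMap r a b)
      = lambdaMap r (rhoMap r (lambdaMap r b w) a) (rhoMap r w b) :=
  congrArg (fun q : X × X × X => q.2.1) (congrFun hBr (a, b, w))

lemma yb_comp3 {X : Type} {r : X × X → X × X} (hBr : IsBraided r) (a b w : X) :
    rhoMap r w (rhoMap r b a)
      = rhoMap r (rhoMap r w b) (rhoMap r (lambdaMap r b w) a) :=
  congrArg (fun q : X × X × X => q.2.2) (congrFun hBr (a, b, w))

lemma sigma_eq {X : Type} [Nonempty X] {r : X × X → X × X} (hNd : Nondegenerate r)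
    (a b : X) :
    sigmaMap r (lambdaMap r a b) a = lambdaMap r (lambdaMap r a b) (rhoMap r b a) := by
  unfold sigmaMap
  rw [Function.leftInverse_invFun (hNd.1 a).1 b]

lemma sigma_rack {X : Type} [Nonempty X] {r : X × X → X × X} (hBr : IsBraided r)
    (hNd : Nondegenerate r) (x y z : X) :
    sigmaMap r z (sigmaMap r y x) = sigmaMap r (sigmaMap r z y) (sigmaMap r z x) :=
  rack_abstract (lambdaMap r) (rhoMap r) (sigmaMap r) (fun a => (hNd.1 a).2)
    (yb_comp1 hBr) (yb_comp2 hBr) (yb_comp3 hBr) (sigma_eq hNd) x y z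

/-- The left derived map of a braided non-degenerate solution is braided. -/
lemma derived_braided {X : Type} [Nonempty X] {r : X × X → X × X} (hBr : IsBraided r)
    (hNd : Nondegenerate r) :
    IsBraided (fun p : X × X => (p.2, sigmaMap r p.2 p.1)) := by
  funext p
  obtain ⟨a, b, c⟩ := p
  show ((c, sigmaMap r c b, sigmaMap r c (sigmaMap r b a)) : X × X × X)
      = (c, sigmaMap r c b, sigmaMap r (sigmaMap r c b) (sigmaMap r c a))
  rw [sigma_rack hBr hNd a b c]

/-- If the left derived solution of a finite non-degenerate solution `(X, r)`
with `|X| ≥ 2` is simple, then `(X, r)` is simple. -/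
theorem stmt_4 {X : Type} [Fintype X] [Nonempty X] (hX : 2 ≤ Nat.card X)
    (r : X × X → X × X) (hBr : IsBraided r) (hNd : Nondegenerate r)
    (r' : X × X → X × X) (hr' : ∀ x y : X, r' (x, y) = (y, sigmaMap r y x))
    (hsimple : SimpleSolution X r') :
    SimpleSolution X r := by
  refine ⟨hX, ?_⟩
  intro Y s f hsBr hf hhom
  haveI : Finite Y := Finite.of_surjective f hf
  haveI : Nonempty Y := Nonempty.map f ‹Nonempty X›
  have hlam : ∀ x w : X, lambdaMap s (f x) (f w) = f (lambdaMap r x w) :=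
    fun x w => (congrArg Prod.fst (hhom x w)).symm
  have hrho : ∀ x w : X, rhoMap s (f w) (f x) = f (rhoMap r w x) :=
    fun x w => (congrArg Prod.snd (hhom x w)).symm
  have hsNd : Nondegenerate s := by
    constructor
    · intro a
      obtain ⟨x, rfl⟩ := hf a
      have hsurj : Function.Surjective (lambdaMap s (f x)) := by
        intro b
        obtain ⟨y, rfl⟩ := hf b
        obtain ⟨w, hw⟩ := (hNd.1 x).2 y
        exact ⟨f w, by rw [hlam x w, hw]⟩
      exact Finite.surjective_iff_bijective.1 hsurj
    · intro a
      obtain ⟨x, rfl⟩ := hf a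
      have hsurj : Function.Surjective (rhoMap s (f x)) := by
        intro b
        obtain ⟨y, rfl⟩ := hf b
        obtain ⟨w, hw⟩ := (hNd.2 x).2 y
        exact ⟨f w, by rw [hrho w x, hw]⟩
      exact Finite.surjective_iff_bijective.1 hsurj
  have hinv : ∀ x y : X, f (Function.invFun (lambdaMap r x) y)
      = Function.invFun (lambdaMap s (f x)) (f y) := by
    intro x y
    apply (hsNd.1 (f x)).1
    rw [hlam x (Function.invFun (lambdaMap r x) y),
      Function.invFun_eq ((hNd.1 x).2 y),
      Function.invFun_eq ((hsNd.1 (f x)).2 (f y))]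
  have hsig : ∀ y x : X, f (sigmaMap r y x) = sigmaMap s (f y) (f x) := by
    intro y x
    unfold sigmaMap
    rw [← hlam y (rhoMap r (Function.invFun (lambdaMap r x) y) x),
      ← hrho x (Function.invFun (lambdaMap r x) y), hinv x y]
  have hs'Br : IsBraided (fun p : Y × Y => (p.2, sigmaMap s p.2 p.1)) :=
    derived_braided hsBr hsNd
  have hhom' : IsSolHom r' (fun p : Y × Y => (p.2, sigmaMap s p.2 p.1)) f := by
    intro x y
    rw [hr' x y]
    show (f y, f (sigmaMap r y x)) = (f y, sigmaMap s (f y) (f x))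
    rw [hsig y x]
  exact hsimple.2 Y (fun p : Y × Y => (p.2, sigmaMap s p.2 p.1)) f hs'Br hf hhom'
end

section
/- Every indecomposable finite non-degenerate set-theoretic solution (X,r) of the Yang–Baxter equation whose underlying set X has prime cardinality is a simple solution. -/
open Finset in
lemma fiber_card_invariant {X Y : Type} [Fintype X] [Fintype Y] [DecidableEq Y]
    (f : X → Y) (hsurj : Function.Surjective f)
    (g : X → X) (hg : Function.Injective g)
    (h : Y → Y) (hcomm : ∀ x, f (g x) = h (f x)) (z : Y) :
    (Finset.univ.filter (fun x => f x = z)).card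
      = (Finset.univ.filter (fun x => f x = h z)).card := by
  classical
  set d : Y → ℕ := fun w => (Finset.univ.filter (fun x => f x = w)).card with hd
  have hle : ∀ w : Y, d w ≤ d (h w) := by
    intro w
    apply Finset.card_le_card_of_injOn g
    · intro a ha
      simp only [Finset.mem_coe, Finset.mem_filter, Finset.mem_univ, true_and] at ha ⊢
      rw [hcomm a, ha]
    · exact fun a _ b _ hab => hg hab
  have hgbij : Function.Bijective g := (Finite.injective_iff_bijective).mp hg
  have hhsurj : Function.Surjective h := by
    intro w
    obtain ⟨x, hx⟩ := hsurj w
    obtain ⟨x', hx'⟩ := hgbij.2 x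
    exact ⟨f x', by rw [← hcomm x', hx', hx]⟩
  have hhbij : Function.Bijective h := (Finite.surjective_iff_bijective).mp hhsurj
  let e : Y ≃ Y := Equiv.ofBijective h hhbij
  have hsum : ∑ w : Y, d (h w) = ∑ w : Y, d w := Equiv.sum_comp e d
  have := (Finset.sum_eq_sum_iff_of_le (fun w _ => hle w)).mp hsum.symm
  exact this z (Finset.mem_univ z)


/-- Every indecomposable finite non-degenerate solution of prime
cardinality is simple. -/
theorem stmt_5 {X : Type} [Fintype X]
    (r : X × X → X × X) (hBr : IsBraided r) (hNd : Nondegenerate r)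
    (hprime : (Nat.card X).Prime) (hind : ¬ Decomposable r) :
    SimpleSolution X r := by
  classical
  refine ⟨hprime.two_le, ?_⟩
  intro Y s f hBs hsurj hhom
  have hXcard : Nat.card X = Fintype.card X := Nat.card_eq_fintype_card
  have hXne : Nonempty X := (Nat.card_pos_iff.mp hprime.pos).1
  have hFY : Fintype Y := Fintype.ofSurjective f hsurj
  set d : Y → ℕ := fun z => (Finset.univ.filter (fun x => f x = z)).card with hd
  have hfl : ∀ x y : X, f (lambdaMap r x y) = lambdaMap s (f x) (f y) := by
    intro x y
    have := congrArg Prod.fst (hhom x y)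
    simpa [lambdaMap, Prod.map] using this
  have hfr : ∀ x y : X, f (rhoMap r y x) = rhoMap s (f y) (f x) := by
    intro x y
    have := congrArg Prod.snd (hhom x y)
    simpa [rhoMap, Prod.map] using this
  -- fiber size invariant under λ_{f x} and ρ_{f y}
  have hinvl : ∀ (x : X) (z : Y), d z = d (lambdaMap s (f x) z) :=
    fun x z => fiber_card_invariant f hsurj (lambdaMap r x) (hNd.1 x).1
      (lambdaMap s (f x)) (fun y => hfl x y) z
  have hinvr : ∀ (y : X) (z : Y), d z = d (rhoMap s (f y) z) :=
    fun y z => fiber_card_invariant f hsurj (rhoMap r y) (hNd.2 y).1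
      (rhoMap s (f y)) (fun x => hfr x y) z
  -- fibers are nonempty
  have hdpos : ∀ z : Y, 0 < d z := by
    intro z
    obtain ⟨x, hx⟩ := hsurj z
    exact Finset.card_pos.mpr ⟨x, by simp [hx]⟩
  -- maximal fiber size
  have hYne : Nonempty Y := ⟨f (Classical.arbitrary X)⟩
  obtain ⟨zmax, -, hmax⟩ := Finset.exists_max_image (Finset.univ : Finset Y) d
    ⟨Classical.arbitrary Y, Finset.mem_univ _⟩
  by_cases hall : ∀ z : Y, d z = d zmax
  · -- all fibers equal: card X = card Y * d zmax
    have hsum : Fintype.card X = ∑ z : Y, d z :=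
      Finset.card_eq_sum_card_fiberwise (fun x _ => Finset.mem_univ (f x))
    have hmul : Fintype.card X = Fintype.card Y * d zmax := by
      rw [hsum]
      simp [hall, Finset.sum_const, Finset.card_univ, Nat.smul_one_eq_cast]
    have hdvd : d zmax ∣ Nat.card X := by
      rw [hXcard, hmul]; exact dvd_mul_left _ _
    rcases (hprime.eq_one_or_self_of_dvd _ hdvd) with h1 | hp
    · -- d zmax = 1 : f injective
      left
      refine ⟨?_, hsurj⟩
      intro a b hab
      have hda : d (f a) = 1 := (hall (f a)).trans h1
      have hcard1 : (Finset.univ.filter (fun x => f x = f a)).card ≤ 1 := by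
        simpa [hd] using hda.le
      have ha' : a ∈ Finset.univ.filter (fun x => f x = f a) := by simp
      have hb' : b ∈ Finset.univ.filter (fun x => f x = f a) := by simp [hab]
      exact Finset.card_le_one.mp hcard1 a ha' b hb'
    · -- d zmax = card X : card Y = 1
      right
      have hYpos : 0 < Fintype.card Y := Fintype.card_pos
      have hXpos : 0 < Fintype.card X := Fintype.card_pos
      rw [hXcard] at hp
      rw [hp] at hmul
      have hY1 : Fintype.card Y = 1 := by
        rcases Nat.lt_or_ge (Fintype.card Y) 2 with h | h
        · omega
        · exfalso
          have h2 : 2 * Fintype.card X ≤ Fintype.card Y * Fintype.card X :=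
            Nat.mul_le_mul_right _ h
          linarith [hmul, h2, hXpos]
      rw [Nat.card_eq_fintype_card, hY1]
  · -- not all fibers equal: build a decomposition, contradiction
    exfalso
    apply hind
    push_neg at hall
    obtain ⟨z0, hz0⟩ := hall
    obtain ⟨x0, hx0⟩ := hsurj z0
    obtain ⟨xm, hxm⟩ := hsurj zmax
    refine ⟨{x : X | d (f x) = d zmax}, {x : X | d (f x) ≠ d zmax}, ⟨xm, by simp [hxm]⟩,
      ⟨x0, by simp [hx0, hz0]⟩, ?_, ?_, ?_, ?_⟩
    · rw [Set.disjoint_left]; intro a ha ha'; exact ha' ha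
    · ext x; simp [em]
    · intro x y hx hy
      constructor
      · show d (f ((r (x, y)).1)) = d zmax
        have : (r (x, y)).1 = lambdaMap r x y := rfl
        rw [this, hfl x y, ← hinvl x (f y)]; exact hy
      · show d (f ((r (x, y)).2)) = d zmax
        have : (r (x, y)).2 = rhoMap r y x := rfl
        rw [this, hfr x y, ← hinvr y (f x)]; exact hx
    · intro x y hx hy
      constructor
      · show d (f ((r (x, y)).1)) ≠ d zmax
        have : (r (x, y)).1 = lambdaMap r x y := rfl
        rw [this, hfl x y, ← hinvl x (f y)]; exact hy
      · show d (f ((r (x, y)).2)) ≠ d zmax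
        have : (r (x, y)).2 = rhoMap r y x := rfl
        rw [this, hfr x y, ← hinvr y (f x)]; exact hx
end

section
/- Let (X,r) be a finite non-degenerate set-theoretic solution of the Yang–Baxter equation. Then for all x, y ∈ X one has λ_y(q(ρ_y(x))) = σ_y(q(x)), where q is the diagonal map and σ the derived map of (X,r). (Equivalently, σ_y = λ_y ∘ q ∘ ρ_y ∘ q^{-1} whenever q is bijective.) -/
/-- For a finite non-degenerate solution, `λ_y (q (ρ_y x)) = σ_y (q x)`
for all `x, y`, where `q` is the diagonal map and `σ` the derived map. -/
theorem stmt_6 {X : Type} [Fintype X] [Nonempty X]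
    (r : X × X → X × X) (hBr : IsBraided r) (hNd : Nondegenerate r) :
    ∀ x y : X, lambdaMap r y (diagMap r (rhoMap r y x)) = sigmaMap r y (diagMap r x) := by
  intro x y
  obtain ⟨hl, hr⟩ := hNd
  set a := diagMap r x with ha
  have hxa : lambdaMap r x a = x := Function.rightInverse_invFun (hl x).2 x
  set t := Function.invFun (lambdaMap r a) y with ht
  have hat : lambdaMap r a t = y := Function.rightInverse_invFun (hl a).2 y
  have hb := congrFun hBr (x, a, t)
  simp only [Function.comp_apply, r12, r23] at hb
  have hb1 := congrArg Prod.fst hb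
  have hb2 := congrArg (fun p => p.2.1) hb
  simp only at hb1 hb2
  -- rewrite components in lambda/rho notation
  have e1 : lambdaMap r (lambdaMap r x a) (lambdaMap r (rhoMap r a x) t)
      = lambdaMap r x (lambdaMap r a t) := hb1
  have e2 : rhoMap r (lambdaMap r (rhoMap r a x) t) (lambdaMap r x a)
      = lambdaMap r (rhoMap r (lambdaMap r a t) x) (rhoMap r t a) := hb2
  rw [hxa, hat] at e1 e2
  -- e1 : λ_x (λ_{ρ_a x} t) = λ_x (λ_a t) = λ_x y, so λ_{ρ_a x} t = y
  have e1' : lambdaMap r (rhoMap r a x) t = y := by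
    exact (hl x).1 e1
  rw [e1'] at e2
  -- e2 : ρ_y x = λ_{ρ_y x} (ρ_t a)
  have hq : diagMap r (rhoMap r y x) = rhoMap r t a := by
    apply (hl (rhoMap r y x)).1
    rw [← e2]
    exact Function.rightInverse_invFun (hl (rhoMap r y x)).2 _
  rw [hq, sigmaMap, ← ht]
end

section
/- Let (X,r) be a finite non-degenerate set-theoretic solution of the Yang–Baxter equation. Then for all x, y, z ∈ X one has λ_x(σ_y(z)) = σ_{λ_x(y)}(λ_x(z)), where σ denotes the derived map of (X,r). -/
/-- For a finite non-degenerate solution, `λ_x (σ_y z) = σ_{λ_x y} (λ_x z)`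
for all `x, y, z`. -/
theorem stmt_7 {X : Type} [Fintype X] [Nonempty X]
    (r : X × X → X × X) (hBr : IsBraided r) (hNd : Nondegenerate r) :
    ∀ x y z : X,
      lambdaMap r x (sigmaMap r y z) = sigmaMap r (lambdaMap r x y) (lambdaMap r x z) := by
  have hcomp : ∀ a b c : X,
      (r12 r) ((r23 r) ((r12 r) (a, b, c))) = (r23 r) ((r12 r) ((r23 r) (a, b, c))) := by
    intro a b c
    exact congrFun hBr (a, b, c)
  have YB : ∀ a b c : X,
      lambdaMap r (lambdaMap r a b) (lambdaMap r (rhoMap r b a) c) =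
          lambdaMap r a (lambdaMap r b c) ∧
      rhoMap r (lambdaMap r (rhoMap r b a) c) (lambdaMap r a b) =
          lambdaMap r (rhoMap r (lambdaMap r b c) a) (rhoMap r c b) := by
    intro a b c
    have h := hcomp a b c
    simp only [r12, r23, Prod.mk.injEq, lambdaMap, rhoMap] at h ⊢
    exact ⟨h.1, congrArg Prod.fst h.2⟩
  intro x y z
  set t := Function.invFun (lambdaMap r z) y with ht
  have hzt : lambdaMap r z t = y := Function.rightInverse_invFun (hNd.1 z).2 y
  have hs : Function.invFun (lambdaMap r (lambdaMap r x z)) (lambdaMap r x y) =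
      lambdaMap r (rhoMap r z x) t := by
    apply (hNd.1 (lambdaMap r x z)).1
    rw [Function.rightInverse_invFun (hNd.1 (lambdaMap r x z)).2, (YB x z t).1, hzt]
  show lambdaMap r x (lambdaMap r y (rhoMap r t z)) =
      lambdaMap r (lambdaMap r x y)
        (rhoMap r (Function.invFun (lambdaMap r (lambdaMap r x z)) (lambdaMap r x y))
          (lambdaMap r x z))
  rw [hs, ← (YB x y (rhoMap r t z)).1]
  congr 1
  have h2 := (YB x z t).2
  rw [hzt] at h2
  exact h2.symm
end

section
/- Let (X,r) be a finite non-degenerate set-theoretic solution of the Yang–Baxter equation. Then its left derived solution (X,r'), where r'(x,y) = (y, σ_y(x)), is again a non-degenerate set-theoretic solution of the Yang–Baxter equation; in particular each σ_y is bijective and σ_z ∘ σ_y = σ_{σ_z(y)} ∘ σ_z for all y, z ∈ X, so x ◁ y := σ_y(x) defines a rack structure on X. -/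
section YBEAux

variable {X : Type} [Nonempty X]

private lemma ybe_br1 {r : X × X → X × X} (hBr : IsBraided r) (x y z : X) :
    lambdaMap r (lambdaMap r x y) (lambdaMap r (rhoMap r y x) z)
      = lambdaMap r x (lambdaMap r y z) :=
  congrArg (fun p : X × X × X => p.1) (congrFun hBr (x, y, z))

private lemma ybe_br2 {r : X × X → X × X} (hBr : IsBraided r) (x y z : X) :
    rhoMap r (lambdaMap r (rhoMap r y x) z) (lambdaMap r x y)
      = lambdaMap r (rhoMap r (lambdaMap r y z) x) (rhoMap r z y) :=
  congrArg (fun p : X × X × X => p.2.1) (congrFun hBr (x, y, z))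

private lemma ybe_br3 {r : X × X → X × X} (hBr : IsBraided r) (x y z : X) :
    rhoMap r z (rhoMap r y x)
      = rhoMap r (rhoMap r z y) (rhoMap r (lambdaMap r y z) x) :=
  congrArg (fun p : X × X × X => p.2.2) (congrFun hBr (x, y, z))

private lemma ybe_lam_inv {r : X × X → X × X} (hNd : Nondegenerate r) (x y : X) :
    lambdaMap r x (Function.invFun (lambdaMap r x) y) = y :=
  Function.rightInverse_invFun (hNd.1 x).surjective y

private lemma ybe_sigma_eq {r : X × X → X × X} (hNd : Nondegenerate r) (u v : X) :
    sigmaMap r (lambdaMap r u v) u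
      = lambdaMap r (lambdaMap r u v) (rhoMap r v u) := by
  simp only [sigmaMap]
  rw [Function.leftInverse_invFun (hNd.1 u).injective v]

private lemma ybe_sigma_inj {r : X × X → X × X} (hBr : IsBraided r) (hNd : Nondegenerate r)
    (y : X) : Function.Injective (sigmaMap r y) := by
  intro x x' h
  obtain ⟨a, ha⟩ : ∃ a, lambdaMap r x a = y := ⟨_, ybe_lam_inv hNd x y⟩
  obtain ⟨a', ha'⟩ : ∃ a', lambdaMap r x' a' = y := ⟨_, ybe_lam_inv hNd x' y⟩
  have ea : Function.invFun (lambdaMap r x) y = a :=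
    (hNd.1 x).injective (by rw [ybe_lam_inv hNd x y, ha])
  have ea' : Function.invFun (lambdaMap r x') y = a' :=
    (hNd.1 x').injective (by rw [ybe_lam_inv hNd x' y, ha'])
  have h2 : lambdaMap r y (rhoMap r a x) = lambdaMap r y (rhoMap r a' x') := by
    have hx : sigmaMap r y x = lambdaMap r y (rhoMap r a x) := by
      simp only [sigmaMap, ea]
    have hx' : sigmaMap r y x' = lambdaMap r y (rhoMap r a' x') := by
      simp only [sigmaMap, ea']
    rw [← hx, ← hx', h]
  have hc : rhoMap r a x = rhoMap r a' x' := (hNd.1 y).injective h2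
  obtain ⟨t, hat⟩ : ∃ t, lambdaMap r a t = a := ⟨_, ybe_lam_inv hNd a a⟩
  obtain ⟨t', hat'⟩ : ∃ t', lambdaMap r a' t' = a' := ⟨_, ybe_lam_inv hNd a' a'⟩
  have h1 := ybe_br1 hBr x a t
  rw [hat, ha] at h1
  have h1' := ybe_br1 hBr x' a' t'
  rw [hat', ha', ← hc] at h1'
  have key2 : t = t' :=
    (hNd.1 (rhoMap r a x)).injective ((hNd.1 y).injective (h1.trans h1'.symm))
  have h2a := ybe_br2 hBr x a t
  rw [hat, ha] at h2a
  have h2b := ybe_br2 hBr x' a' t'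
  rw [hat', ha', ← hc, ← key2] at h2b
  have key4 : rhoMap r t a = rhoMap r t a' :=
    (hNd.1 (rhoMap r a x)).injective (h2a.symm.trans h2b)
  have key5 : a = a' := (hNd.2 t).injective key4
  rw [← key5] at hc
  exact (hNd.2 a).injective hc

private lemma ybe_rack_core {r : X × X → X × X} (hBr : IsBraided r) (hNd : Nondegenerate r)
    (x a b : X) :
    sigmaMap r (lambdaMap r x (lambdaMap r a b)) (sigmaMap r (lambdaMap r x a) x)
      = sigmaMap r (sigmaMap r (lambdaMap r x (lambdaMap r a b)) (lambdaMap r x a))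
          (sigmaMap r (lambdaMap r x (lambdaMap r a b)) x) := by
  have f1 := ybe_br1 hBr x a b
  have e1 : lambdaMap r (lambdaMap r (lambdaMap r x a) (rhoMap r a x))
      (lambdaMap r (rhoMap r (rhoMap r a x) (lambdaMap r x a)) b)
      = lambdaMap r x (lambdaMap r a b) := by
    rw [ybe_br1 hBr (lambdaMap r x a) (rhoMap r a x) b, f1]
  have lhs1 : sigmaMap r (lambdaMap r x (lambdaMap r a b)) (sigmaMap r (lambdaMap r x a) x)
      = lambdaMap r (lambdaMap r x (lambdaMap r a b))
          (rhoMap r (lambdaMap r (rhoMap r (rhoMap r a x) (lambdaMap r x a)) b)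
            (lambdaMap r (lambdaMap r x a) (rhoMap r a x))) := by
    rw [ybe_sigma_eq hNd x a, ← e1,
      ybe_sigma_eq hNd (lambdaMap r (lambdaMap r x a) (rhoMap r a x))
        (lambdaMap r (rhoMap r (rhoMap r a x) (lambdaMap r x a)) b)]
  rw [ybe_br2 hBr (lambdaMap r x a) (rhoMap r a x) b] at lhs1
  have s3 : sigmaMap r (lambdaMap r x (lambdaMap r a b)) (lambdaMap r x a)
      = lambdaMap r (lambdaMap r x (lambdaMap r a b))
          (rhoMap r (lambdaMap r (rhoMap r a x) b) (lambdaMap r x a)) := by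
    rw [← f1, ybe_sigma_eq hNd (lambdaMap r x a) (lambdaMap r (rhoMap r a x) b)]
  have s2 : sigmaMap r (lambdaMap r x (lambdaMap r a b)) x
      = lambdaMap r (lambdaMap r x (lambdaMap r a b)) (rhoMap r (lambdaMap r a b) x) :=
    ybe_sigma_eq hNd x (lambdaMap r a b)
  have e3 : lambdaMap r (rhoMap r (lambdaMap r a b) x) (rhoMap r b a)
      = rhoMap r (lambdaMap r (rhoMap r a x) b) (lambdaMap r x a) := (ybe_br2 hBr x a b).symm
  have e4 := ybe_br1 hBr (lambdaMap r x (lambdaMap r a b)) (rhoMap r (lambdaMap r a b) x)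
    (rhoMap r b a)
  rw [e3] at e4
  have e5 := ybe_br2 hBr (lambdaMap r x (lambdaMap r a b)) (rhoMap r (lambdaMap r a b) x)
    (rhoMap r b a)
  rw [e3, ← ybe_br3 hBr x a b] at e5
  rw [lhs1, s2, s3, ← e4,
    ybe_sigma_eq hNd
      (lambdaMap r (lambdaMap r x (lambdaMap r a b)) (rhoMap r (lambdaMap r a b) x))
      (lambdaMap r (rhoMap r (rhoMap r (lambdaMap r a b) x) (lambdaMap r x (lambdaMap r a b)))
        (rhoMap r b a)),
    e4, e5,
    ybe_br1 hBr (lambdaMap r x (lambdaMap r a b))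
      (rhoMap r (lambdaMap r (rhoMap r a x) b) (lambdaMap r x a)) (rhoMap r b (rhoMap r a x))]

private lemma ybe_sigma_rack {r : X × X → X × X} (hBr : IsBraided r) (hNd : Nondegenerate r)
    (y z x : X) :
    sigmaMap r z (sigmaMap r y x)
      = sigmaMap r (sigmaMap r z y) (sigmaMap r z x) := by
  obtain ⟨a, ha⟩ : ∃ a, lambdaMap r x a = y := ⟨_, ybe_lam_inv hNd x y⟩
  obtain ⟨m, hm⟩ : ∃ m, lambdaMap r x m = z := ⟨_, ybe_lam_inv hNd x z⟩
  obtain ⟨b, hb⟩ : ∃ b, lambdaMap r a b = m := ⟨_, ybe_lam_inv hNd a m⟩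
  rw [← ha, ← hm, ← hb]
  exact ybe_rack_core hBr hNd x a b

end YBEAux

/-- The left derived solution `r' (x, y) = (y, σ_y x)` of a finite
non-degenerate solution is again a non-degenerate solution of the Yang--Baxter
equation; in particular each `σ_y` is bijective and
`σ_z ∘ σ_y = σ_{σ_z y} ∘ σ_z`, so `x ◁ y := σ_y x` is a rack structure on `X`. -/

theorem stmt_8 {X : Type} [Fintype X] [Nonempty X]
    (r : X × X → X × X) (hBr : IsBraided r) (hNd : Nondegenerate r)
    (r' : X × X → X × X) (hr' : ∀ x y : X, r' (x, y) = (y, sigmaMap r y x)) :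
    IsBraided r' ∧ Nondegenerate r' ∧
    (∀ y : X, Function.Bijective (sigmaMap r y)) ∧
    (∀ y z x : X,
      sigmaMap r z (sigmaMap r y x) = sigmaMap r (sigmaMap r z y) (sigmaMap r z x)) := by
  have hrack : ∀ y z x : X,
      sigmaMap r z (sigmaMap r y x) = sigmaMap r (sigmaMap r z y) (sigmaMap r z x) :=
    fun y z x => ybe_sigma_rack hBr hNd y z x
  have hbij : ∀ y : X, Function.Bijective (sigmaMap r y) := fun y =>
    Finite.injective_iff_bijective.mp (ybe_sigma_inj hBr hNd y)
  refine ⟨?_, ⟨?_, ?_⟩, hbij, hrack⟩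
  · funext p
    obtain ⟨x, y, z⟩ := p
    simp only [Function.comp_apply, r12, r23, hr']
    exact congrArg (fun w => (z, sigmaMap r z y, w)) (hrack y z x)
  · intro x
    have hl : lambdaMap r' x = fun y => y := by
      funext y
      show (r' (x, y)).1 = y
      rw [hr']
    rw [hl]
    exact Function.bijective_id
  · intro y
    have hl : rhoMap r' y = sigmaMap r y := by
      funext x
      show (r' (x, y)).2 = sigmaMap r y x
      rw [hr']
    rw [hl]
    exact hbij y
end

section
/- Let p be a prime, n ≥ 1, and let V be an elementary abelian p-group of order p^n (an n-dimensional vector space over 𝔽_p). Let k > 1 be an integer and let A, A' be commuting automorphisms of V whose orders divide gcd(k, p^n − 1), with A ≠ id. Let u₀ ∈ V and set v₁ = u₀ − A(u₀). Assume: (i) if A' = id and v₁ = 0 then k equals the order of A; (ii) if A' = id and v₁ ≠ 0 then k = p·(order of A); (iii) if A' ≠ id then k = lcm(order of A, order of A'); and (iv) the only additive subgroups of V invariant under both A and A' are 0 and V. Then the map r : V × V → V × V defined by r(v,w) = (A'(w) + v₁, w − A^{-1}(w) + (A'A)^{-1}(v − v₁)) is a non-degenerate, irretractable, simple set-theoretic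 solution of the Yang–Baxter equation on V. -/
/-- the explicit solution on an elementary abelian `p`-group `V` built from
commuting automorphisms `A ≠ 1` and `A'` and an element `u₀` (with `v₁ = u₀ - A u₀`),
subject to the order conditions and the condition that `0` and `V` are the only subgroups
invariant under both `A` and `A'`, is a non-degenerate irretractable simple solution. -/
theorem stmt_9 {V : Type} [AddCommGroup V] [Fintype V] (p n k : ℕ)
    (hp : p.Prime) (hn : 1 ≤ n) (hcard : Fintype.card V = p ^ n)
    (helem : ∀ v : V, p • v = 0) (hk : 1 < k)
    (A A' : AddAut V) (hcomm : A + A' = A' + A)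
    (hordA : addOrderOf A ∣ Nat.gcd k (p ^ n - 1))
    (hordA' : addOrderOf A' ∣ Nat.gcd k (p ^ n - 1))
    (hA : A ≠ 0) (u₀ : V)
    (h1 : A' = 0 → u₀ - A u₀ = 0 → k = addOrderOf A)
    (h2 : A' = 0 → u₀ - A u₀ ≠ 0 → k = p * addOrderOf A)
    (h3 : A' ≠ 0 → k = Nat.lcm (addOrderOf A) (addOrderOf A'))
    (h4 : ∀ W : AddSubgroup V, (∀ w ∈ W, A w ∈ W) → (∀ w ∈ W, A' w ∈ W) → W = ⊥ ∨ W = ⊤)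
    (r : V × V → V × V)
    (hr : ∀ v w : V, r (v, w) =
      (A' w + (u₀ - A u₀), w - (-A) w + (-(A' + A)) (v - (u₀ - A u₀)))) :
    IsBraided r ∧ Nondegenerate r ∧ Irretractable r ∧ SimpleSolution V r := by
  set v₁ : V := u₀ - A u₀ with hv₁
  -- basic commutation lemmas
  have hc : ∀ v : V, A (A' v) = A' (A v) := by
    intro v
    have := congrArg (fun g : AddAut V => g v) hcomm
    simpa using this
  have hAi : ∀ v : V, A ((-A) v) = v := fun v => by simp
  have hiA : ∀ v : V, (-A) (A v) = v := fun v => by simp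
  have hA'i : ∀ v : V, A' ((-A') v) = v := fun v => by simp
  have hiA' : ∀ v : V, (-A') (A' v) = v := fun v => by simp
  have hci : ∀ v : V, (-A) (A' v) = A' ((-A) v) := by
    intro v
    apply A.injective
    rw [hAi, hc, hAi]
  have hci' : ∀ v : V, (-A) ((-A') v) = (-A') ((-A) v) := by
    intro v
    have := hci ((-A') v)
    rw [hA'i] at this
    rw [this, hiA']
  have hB : ∀ v : V, (-(A' + A)) v = (-A) ((-A') v) := by
    intro v
    rw [neg_add_rev]
    rfl
  have hBi : ∀ v : V, (A' + A) ((-(A' + A)) v) = v := fun v => by simp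
  have hiB : ∀ v : V, (-(A' + A)) ((A' + A) v) = v := fun v => by simp
  -- fixed points of A are trivial
  have hfix : ∀ v : V, A v = v → v = 0 := by
    intro v hv
    set W : AddSubgroup V :=
      { carrier := {x | A x = x}
        zero_mem' := by simp
        add_mem' := fun {a b} ha hb => by
          simp only [Set.mem_setOf_eq, map_add] at *
          rw [ha, hb]
        neg_mem' := fun {a} ha => by
          simp only [Set.mem_setOf_eq, map_neg] at *
          rw [ha] } with hWdef
    have hmem : ∀ x : V, x ∈ W ↔ A x = x := fun x => Iff.rfl
    rcases h4 W (fun w hw => by rw [hmem] at *; simp only [hw])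
        (fun w hw => by rw [hmem] at *; rw [hc, hw]) with h | h
    · exact (AddSubgroup.eq_bot_iff_forall W).mp h v hv
    · exfalso
      apply hA
      ext x
      have : x ∈ W := h ▸ AddSubgroup.mem_top x
      exact this
  refine ⟨?_, ?_, ?_, ?_⟩
  · -- Braided
    funext q
    obtain ⟨x, y, z⟩ := q
    simp only [Function.comp_apply, r12, r23, hr]
    refine Prod.ext ?_ (Prod.ext ?_ ?_) <;>
      · simp only [map_add, map_sub, hB, hc, hci, hci', hAi, hiA, hA'i, hiA']
        try abel
  · -- Nondegenerate
    constructor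
    · intro x
      rw [Function.bijective_iff_has_inverse]
      refine ⟨fun w => (-A') (w - v₁), ?_, ?_⟩
      · intro w
        simp [lambdaMap, hr]
      · intro w
        simp [lambdaMap, hr]
    · intro y
      rw [Function.bijective_iff_has_inverse]
      refine ⟨fun u => (A' + A) (u - (y - (-A) y)) + v₁, ?_, ?_⟩
      · intro w
        simp [rhoMap, hr]
      · intro w
        simp [rhoMap, hr]
  · -- Irretractable
    intro x y _ hρ
    have h := congrFun hρ v₁
    simp only [rhoMap, hr, sub_self, map_zero, add_zero] at h
    have h3 : x - (-A) x = y - (-A) y := h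
    have h3' : (-A) x - x = (-A) y - y := by
      have := congrArg Neg.neg h3
      simpa [neg_sub] using this
    have hxy : (-A) (x - y) = x - y := by
      rw [map_sub, sub_eq_sub_iff_sub_eq_sub]
      exact h3'
    have h5 : A (x - y) = x - y := by
      have := congrArg A hxy
      rw [hAi] at this
      exact this.symm
    exact sub_eq_zero.mp (hfix _ h5)
  · -- Simple
    constructor
    · rw [Nat.card_eq_fintype_card, hcard]
      calc 2 ≤ p := hp.two_le
        _ ≤ p ^ n := Nat.le_self_pow (by omega) p
    · intro Y s f _ hfsurj hf
      have hf1 : ∀ x y : V, f (A' y + v₁) = (s (f x, f y)).1 := by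
        intro x y
        have := hf x y
        rw [hr] at this
        exact congrArg Prod.fst this
      have hf2 : ∀ x y : V, f (y - (-A) y + (-(A' + A)) (x - v₁)) = (s (f x, f y)).2 := by
        intro x y
        have := hf x y
        rw [hr] at this
        exact congrArg Prod.snd this
      set W : AddSubgroup V :=
        { carrier := {d | ∀ u, f (u + d) = f u}
          zero_mem' := fun u => by simp
          add_mem' := fun {a b} ha hb u => by
            rw [← add_assoc, hb, ha]
          neg_mem' := fun {a} ha u => by
            have h := ha (u + -a)
            rw [add_assoc, neg_add_cancel, add_zero] at h
            exact h.symm } with hWdef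
      have hmem : ∀ d : V, d ∈ W ↔ ∀ u, f (u + d) = f u := fun d => Iff.rfl
      -- W is A'-invariant
      have hWA' : ∀ w ∈ W, A' w ∈ W := by
        intro d hd
        rw [hmem] at *
        intro u
        have e1 : A' ((-A') (u - v₁)) + v₁ = u := by rw [hA'i]; abel
        have e2 : A' ((-A') (u - v₁) + d) + v₁ = u + A' d := by
          rw [map_add, hA'i]; abel
        calc f (u + A' d) = f (A' ((-A') (u - v₁) + d) + v₁) := by rw [e2]
          _ = (s (f 0, f ((-A') (u - v₁) + d))).1 := hf1 0 _
          _ = (s (f 0, f ((-A') (u - v₁)))).1 := by rw [hd]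
          _ = f (A' ((-A') (u - v₁)) + v₁) := (hf1 0 _).symm
          _ = f u := by rw [e1]
      -- W is (A'*A)⁻¹-invariant
      have hWB : ∀ w ∈ W, (-(A' + A)) w ∈ W := by
        intro d hd
        rw [hmem] at *
        intro u
        have e1 : (0 : V) - (-A) 0 + (-(A' + A)) ((A' + A) u + v₁ - v₁) = u := by
          simp
        have e2 : (0 : V) - (-A) 0 + (-(A' + A)) (((A' + A) u + v₁ + d) - v₁) =
            u + (-(A' + A)) d := by
          have : ((A' + A) u + v₁ + d) - v₁ = (A' + A) u + d := by abel
          rw [this, map_add, hiB]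
          simp
        calc f (u + (-(A' + A)) d)
            = f ((0 : V) - (-A) 0 + (-(A' + A)) (((A' + A) u + v₁ + d) - v₁)) := by rw [e2]
          _ = (s (f ((A' + A) u + v₁ + d), f 0)).2 := hf2 _ 0
          _ = (s (f ((A' + A) u + v₁), f 0)).2 := by rw [hd]
          _ = f ((0 : V) - (-A) 0 + (-(A' + A)) ((A' + A) u + v₁ - v₁)) := (hf2 _ 0).symm
          _ = f u := by rw [e1]
      -- hence (-A)-invariant
      have hWAinv : ∀ w ∈ W, (-A) w ∈ W := by
        intro w hw
        have : (-(A' + A)) (A' w) ∈ W := hWB _ (hWA' w hw)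
        rwa [hB, hiA'] at this
      -- hence A-invariant by finiteness
      have hWA : ∀ w ∈ W, A w ∈ W := by
        intro w hw
        have hinj : Function.Injective (fun x : W => (⟨(-A) x, hWAinv x x.2⟩ : W)) := by
          intro a b hab
          apply Subtype.ext
          have := congrArg (fun x : W => A (x : V)) hab
          simpa [hAi] using this
        have hsurj := Finite.surjective_of_injective hinj
        obtain ⟨e, he⟩ := hsurj ⟨w, hw⟩
        have he' : (-A) (e : V) = w := congrArg Subtype.val he
        have : A w = e := by rw [← he', hAi]
        rw [this]
        exact e.2
      rcases h4 W hWA hWA' with hW | hW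
      · -- f injective
        left
        refine ⟨?_, hfsurj⟩
        intro a b hab
        have hdiff : (b - (-A) b) - (a - (-A) a) ∈ W := by
          rw [hmem]
          intro u
          set x : V := (A' + A) (u - (a - (-A) a)) + v₁ with hx
          have ex : (-(A' + A)) (x - v₁) = u - (a - (-A) a) := by
            rw [hx, add_sub_cancel_right, hiB]
          have c1 : a - (-A) a + (-(A' + A)) (x - v₁) = u := by rw [ex]; abel
          have c2 : b - (-A) b + (-(A' + A)) (x - v₁) =
              u + ((b - (-A) b) - (a - (-A) a)) := by rw [ex]; abel
          calc f (u + ((b - (-A) b) - (a - (-A) a)))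
              = f (b - (-A) b + (-(A' + A)) (x - v₁)) := by rw [c2]
            _ = (s (f x, f b)).2 := hf2 x b
            _ = (s (f x, f a)).2 := by rw [hab]
            _ = f (a - (-A) a + (-(A' + A)) (x - v₁)) := (hf2 x a).symm
            _ = f u := by rw [c1]
        rw [hW, AddSubgroup.mem_bot] at hdiff
        have h3 : b - (-A) b = a - (-A) a := sub_eq_zero.mp hdiff
        have h3' : (-A) a - a = (-A) b - b := by
          have := congrArg Neg.neg h3
          simp only [neg_sub] at this
          exact this.symm
        have hab' : (-A) (a - b) = a - b := by
          rw [map_sub, sub_eq_sub_iff_sub_eq_sub]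
          exact h3'
        have h5 : A (a - b) = a - b := by
          have := congrArg A hab'
          rw [hAi] at this
          exact this.symm
        exact sub_eq_zero.mp (hfix _ h5)
      · -- f constant
        right
        have hconst : ∀ v : V, f v = f 0 := by
          intro v
          have hv : v ∈ W := hW ▸ AddSubgroup.mem_top v
          rw [hmem] at hv
          have := hv 0
          rwa [zero_add] at this
        have hsub : Subsingleton Y := by
          constructor
          intro a b
          obtain ⟨va, rfl⟩ := hfsurj a
          obtain ⟨vb, rfl⟩ := hfsurj b
          rw [hconst va, hconst vb]
        exact Nat.card_eq_one_iff_unique.mpr ⟨hsub, ⟨f 0⟩⟩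
end

section
/- Let V be an abelian group, k ≥ 1 an integer, A and A' commuting automorphisms of V with A^k = id and A'^k = id, and u₀ ∈ V; set v₁ = u₀ − A(u₀) and assume v₁ + A'(v₁) + ⋯ + A'^{k−1}(v₁) = 0. Let B = V ⋊ (ℤ/kℤ) with (v,i) + (w,j) = (v + A^i(w), i + j), and let λ : B → B be the automorphism λ(v,i) = (A'(v) + u₀ − A^i(u₀), i). Then λ^k = id_B, and the operation a ∘ b := a + λ^{|a|}(b), where |a| ∈ {0, …, k−1} is the representative of the ℤ/kℤ-component of a, makes B into a group with the same identity element (0,0), and a ∘ (b + c) = a ∘ b − a + a ∘ c holds for all a, b, c ∈ B (so (B, +, ∘) is a skew left brace). -/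
/-- Addition on the semidirect product `B = V ⋊ ℤ/kℤ`, where `i ∈ ℤ/kℤ` acts via `A^i`:
`(v, i) + (w, j) = (v + A^i w, i + j)`. -/
def badd {V : Type} [AddCommGroup V] (k : ℕ) (A : AddAut V)
    (a b : V × ZMod k) : V × ZMod k :=
  (a.1 + (a.2.val • A) b.1, a.2 + b.2)

/-- The additive inverse of `(v, i)` in `B = V ⋊ ℤ/kℤ` (valid when `A^k = 1`). -/
def bneg {V : Type} [AddCommGroup V] (k : ℕ) (A : AddAut V)
    (a : V × ZMod k) : V × ZMod k :=
  (((-a.2).val • A) (-a.1), -a.2)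

/-- The map `λ (v, i) = (A' v + u₀ - A^i u₀, i)` on `B = V ⋊ ℤ/kℤ`. -/
def blam {V : Type} [AddCommGroup V] (k : ℕ) (A A' : AddAut V) (u₀ : V)
    (a : V × ZMod k) : V × ZMod k :=
  (A' a.1 + u₀ - (a.2.val • A) u₀, a.2)

/-- The multiplication `a ∘ b = a + λ^{|a|} (b)` on `B = V ⋊ ℤ/kℤ`, where
`|a| ∈ {0, …, k-1}` is the representative of the `ℤ/kℤ`-component of `a`. -/
def bcirc {V : Type} [AddCommGroup V] (k : ℕ) (A A' : AddAut V) (u₀ : V)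
    (a b : V × ZMod k) : V × ZMod k :=
  badd k A a ((blam k A A' u₀)^[a.2.val] b)

set_option linter.unusedSectionVars false
set_option linter.unusedVariables false

section Aux

variable {V : Type} [AddCommGroup V] (k : ℕ) [NeZero k] (A A' : AddAut V) (u₀ : V)

lemma my_pow_mod {G : Type*} [AddMonoid G] (g : G) (k : ℕ) (hg : k • g = 0) (n : ℕ) :
    (n % k) • g = n • g := by
  conv_rhs => rw [← Nat.div_add_mod n k]
  rw [add_nsmul, mul_nsmul, hg, nsmul_zero, zero_add]

lemma Aval_add (hAk : k • A = 0) (i j : ZMod k) :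
    (((i + j).val) • A : AddAut V) = i.val • A + j.val • A := by
  rw [ZMod.val_add, my_pow_mod A k hAk, add_nsmul]

lemma badd_assoc (hAk : k • A = 0) (a b c : V × ZMod k) :
    badd k A (badd k A a b) c = badd k A a (badd k A b c) := by
  unfold badd
  refine Prod.ext ?_ ?_
  · simp [Aval_add k A hAk, add_assoc]
  · simp [add_assoc]

lemma badd_zero_right (a : V × ZMod k) : badd k A a (0, 0) = a := by
  simp [badd]

lemma badd_zero_left (a : V × ZMod k) : badd k A (0, 0) a = a := by
  simp [badd]

lemma badd_neg_right (hAk : k • A = 0) (a : V × ZMod k) :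
    badd k A a (bneg k A a) = (0, 0) := by
  unfold badd bneg
  refine Prod.ext ?_ ?_
  · have h : (a.2.val • A) + ((-a.2).val • A) = 0 := by
      rw [← Aval_add k A hAk, add_neg_cancel, ZMod.val_zero, zero_nsmul]
    show a.1 + ((a.2.val • A) + ((-a.2).val • A)) (-a.1) = 0
    rw [h]
    simp
  · simp

lemma badd_neg_left (hAk : k • A = 0) (a : V × ZMod k) :
    badd k A (bneg k A a) a = (0, 0) := by
  unfold badd bneg
  refine Prod.ext ?_ ?_
  · show ((-a.2).val • A) (-a.1) + ((-a.2).val • A) a.1 = 0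
    rw [← map_add, neg_add_cancel, map_zero]
  · simp

lemma commAA' (hcomm : A + A' = A' + A) (m : ℕ) (v : V) :
    A' ((m • A) v) = (m • A) (A' v) := by
  have hC : AddCommute A' A := hcomm.symm
  have h := (hC.nsmul_right m)
  calc A' ((m • A) v) = (A' + m • A) v := rfl
    _ = (m • A + A') v := by rw [h]
    _ = (m • A) (A' v) := rfl

lemma blam_add (hcomm : A + A' = A' + A) (hAk : k • A = 0) (a b : V × ZMod k) :
    blam k A A' u₀ (badd k A a b) = badd k A (blam k A A' u₀ a) (blam k A A' u₀ b) := by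
  unfold blam badd
  refine Prod.ext ?_ rfl
  simp only [Aval_add k A hAk, map_add, map_sub, AddAut.add_apply,
    commAA' A A' hcomm]
  abel

lemma blam_iter (n : ℕ) (a : V × ZMod k) :
    (blam k A A' u₀)^[n] a =
      ((n • A') a.1 + ∑ j ∈ Finset.range n, (j • A') (u₀ - (a.2.val • A) u₀), a.2) := by
  induction n with
  | zero => simp
  | succ n ih =>
      rw [Function.iterate_succ_apply', ih]
      unfold blam
      refine Prod.ext ?_ rfl
      simp only [map_add, Finset.sum_range_succ', zero_nsmul, AddAut.zero_apply,
        map_sum]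
      have h1 : ∀ v : V, A' ((n • A') v) = ((n + 1) • A') v := by
        intro v; rw [succ_nsmul']; rfl
      have h2 : ∀ j, A' ((j • A') (u₀ - (a.2.val • A) u₀)) =
          ((j + 1) • A') (u₀ - (a.2.val • A) u₀) := by
        intro j; rw [succ_nsmul']; rfl
      simp only [h1, h2]
      abel

lemma blam_snd (n : ℕ) (a : V × ZMod k) : ((blam k A A' u₀)^[n] a).2 = a.2 := by
  rw [blam_iter]

lemma comm_pow_apply (hcomm : A + A' = A' + A) (m n : ℕ) (v : V) :
    (m • A) ((n • A') v) = (n • A') ((m • A) v) := by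
  have hC : AddCommute (m • A) (n • A') := AddCommute.nsmul_nsmul (hcomm) m n
  calc (m • A) ((n • A') v) = ((m • A) + (n • A')) v := rfl
    _ = ((n • A') + (m • A)) v := by rw [hC]
    _ = (n • A') ((m • A) v) := rfl

lemma fixed_sum (hcomm : A + A' = A' + A)
    (hsum : ∑ i ∈ Finset.range k, (i • A') (u₀ - A u₀) = 0) (m : ℕ) :
    ∑ j ∈ Finset.range k, (j • A') (u₀ - (m • A) u₀) = 0 := by
  set s : V := ∑ j ∈ Finset.range k, (j • A') u₀ with hs
  have key : ∀ m : ℕ, ∑ j ∈ Finset.range k, (j • A') (u₀ - (m • A) u₀) = s - (m • A) s := by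
    intro m
    calc ∑ j ∈ Finset.range k, (j • A') (u₀ - (m • A) u₀)
        = ∑ j ∈ Finset.range k, ((j • A') u₀ - (m • A) ((j • A') u₀)) := by
          refine Finset.sum_congr rfl fun j _ => ?_
          rw [map_sub, comm_pow_apply A A' hcomm]
      _ = s - (m • A) s := by
          rw [Finset.sum_sub_distrib, hs, map_sum]
  have hAs : A s = s := by
    have h1 : s - A s = 0 := by
      have := key 1
      rw [one_nsmul] at this
      rw [← this]
      exact hsum
    linear_combination (norm := abel) -h1
  have hAms : (m • A) s = s := by
    induction m with
    | zero => simp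
    | succ n ih =>
        have h2 : ((n + 1) • A) s = A ((n • A) s) := by rw [succ_nsmul']; rfl
        rw [h2, ih, hAs]
  rw [key m, hAms, sub_self]

lemma blam_k (hcomm : A + A' = A' + A) (hA'k : k • A' = 0)
    (hsum : ∑ i ∈ Finset.range k, (i • A') (u₀ - A u₀) = 0) :
    (blam k A A' u₀)^[k] = id := by
  funext a
  rw [blam_iter, fixed_sum k A A' u₀ hcomm hsum, hA'k]
  simp

lemma blam_iter_add (hcomm : A + A' = A' + A) (hAk : k • A = 0) (n : ℕ) (a b : V × ZMod k) :
    (blam k A A' u₀)^[n] (badd k A a b)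
      = badd k A ((blam k A A' u₀)^[n] a) ((blam k A A' u₀)^[n] b) := by
  induction n with
  | zero => simp
  | succ n ih =>
      rw [Function.iterate_succ_apply', Function.iterate_succ_apply',
        Function.iterate_succ_apply', ih, blam_add k A A' u₀ hcomm hAk]

lemma blam_mod (hcomm : A + A' = A' + A) (hA'k : k • A' = 0)
    (hsum : ∑ i ∈ Finset.range k, (i • A') (u₀ - A u₀) = 0) (n : ℕ) :
    (blam k A A' u₀)^[n] = (blam k A A' u₀)^[n % k] := by
  conv_lhs => rw [← Nat.div_add_mod n k]
  rw [Function.iterate_add, Function.iterate_mul,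
    blam_k k A A' u₀ hcomm hA'k hsum, Function.iterate_id]
  simp

lemma blam_val_add (hcomm : A + A' = A' + A) (hA'k : k • A' = 0)
    (hsum : ∑ i ∈ Finset.range k, (i • A') (u₀ - A u₀) = 0) (i j : ZMod k)
    (b : V × ZMod k) :
    (blam k A A' u₀)^[(i + j).val] b
      = (blam k A A' u₀)^[i.val] ((blam k A A' u₀)^[j.val] b) := by
  rw [ZMod.val_add, ← blam_mod k A A' u₀ hcomm hA'k hsum,
    Function.iterate_add_apply]

lemma blam_zero : (blam k A A' u₀) (0, 0) = ((0 : V), (0 : ZMod k)) := by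
  unfold blam
  simp

end Aux

/-- under the hypotheses `A^k = 1`, `A'^k = 1`, `A A' = A' A` and
`v₁ + A' v₁ + ⋯ + A'^{k-1} v₁ = 0` (where `v₁ = u₀ - A u₀`), the map `λ` satisfies
`λ^k = id`, and `a ∘ b = a + λ^{|a|}(b)` makes `B = V ⋊ ℤ/kℤ` into a group with the same
identity `(0, 0)` as `(B, +)`, satisfying the skew left brace axiom
`a ∘ (b + c) = a ∘ b - a + a ∘ c`. -/
theorem stmt_11 {V : Type} [AddCommGroup V] (k : ℕ) (hk : 1 ≤ k)
    (A A' : AddAut V) (hcomm : A + A' = A' + A) (hAk : k • A = 0) (hA'k : k • A' = 0)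
    (u₀ : V) (hsum : ∑ i ∈ Finset.range k, (i • A') (u₀ - A u₀) = 0) :
    ((blam k A A' u₀)^[k] = id) ∧
    (∀ a b c : V × ZMod k,
      bcirc k A A' u₀ (bcirc k A A' u₀ a b) c = bcirc k A A' u₀ a (bcirc k A A' u₀ b c)) ∧
    (∀ a : V × ZMod k, bcirc k A A' u₀ a (0, 0) = a ∧ bcirc k A A' u₀ (0, 0) a = a) ∧
    (∀ a : V × ZMod k, badd k A a (bneg k A a) = (0, 0) ∧ badd k A (bneg k A a) a = (0, 0)) ∧
    (∀ a : V × ZMod k, ∃ b : V × ZMod k,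
      bcirc k A A' u₀ a b = (0, 0) ∧ bcirc k A A' u₀ b a = (0, 0)) ∧
    (∀ a b c : V × ZMod k,
      bcirc k A A' u₀ a (badd k A b c) =
        badd k A (badd k A (bcirc k A A' u₀ a b) (bneg k A a)) (bcirc k A A' u₀ a c)) := by
  haveI : NeZero k := ⟨by omega⟩
  have hlamk : (blam k A A' u₀)^[k] = id := blam_k k A A' u₀ hcomm hA'k hsum
  have hsnd : ∀ a b : V × ZMod k, (bcirc k A A' u₀ a b).2 = a.2 + b.2 := by
    intro a b
    show (badd k A a ((blam k A A' u₀)^[a.2.val] b)).2 = a.2 + b.2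
    rw [badd, blam_snd]
  have hassoc : ∀ a b c : V × ZMod k,
      bcirc k A A' u₀ (bcirc k A A' u₀ a b) c = bcirc k A A' u₀ a (bcirc k A A' u₀ b c) := by
    intro a b c
    show badd k A (bcirc k A A' u₀ a b)
        ((blam k A A' u₀)^[(bcirc k A A' u₀ a b).2.val] c) = _
    rw [hsnd a b, blam_val_add k A A' u₀ hcomm hA'k hsum a.2 b.2 c]
    show badd k A (badd k A a ((blam k A A' u₀)^[a.2.val] b))
        ((blam k A A' u₀)^[a.2.val] ((blam k A A' u₀)^[b.2.val] c))
      = badd k A a ((blam k A A' u₀)^[a.2.val]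
          (badd k A b ((blam k A A' u₀)^[b.2.val] c)))
    rw [badd_assoc k A hAk, blam_iter_add k A A' u₀ hcomm hAk]
  have hid : ∀ a : V × ZMod k,
      bcirc k A A' u₀ a (0, 0) = a ∧ bcirc k A A' u₀ (0, 0) a = a := by
    intro a
    constructor
    · show badd k A a ((blam k A A' u₀)^[a.2.val] (0, 0)) = a
      rw [Function.iterate_fixed (blam_zero k A A' u₀) a.2.val]
      exact badd_zero_right k A a
    · show badd k A (0, 0) ((blam k A A' u₀)^[((0,0) : V × ZMod k).2.val] a) = a
      have h0 : ((0,0) : V × ZMod k).2.val = 0 := ZMod.val_zero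
      rw [h0, Function.iterate_zero, id_eq]
      exact badd_zero_left k A a
  have hneg : ∀ a : V × ZMod k,
      badd k A a (bneg k A a) = (0, 0) ∧ badd k A (bneg k A a) a = (0, 0) :=
    fun a => ⟨badd_neg_right k A hAk a, badd_neg_left k A hAk a⟩
  have hrinv : ∀ a : V × ZMod k,
      bcirc k A A' u₀ a ((blam k A A' u₀)^[k - a.2.val] (bneg k A a)) = (0, 0) := by
    intro a
    show badd k A a ((blam k A A' u₀)^[a.2.val]
        ((blam k A A' u₀)^[k - a.2.val] (bneg k A a))) = (0, 0)
    rw [← Function.iterate_add_apply]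
    have hv : a.2.val + (k - a.2.val) = k := by
      have := ZMod.val_lt a.2
      omega
    rw [hv, hlamk, id_eq]
    exact badd_neg_right k A hAk a
  refine ⟨hlamk, hassoc, hid, hneg, ?_, ?_⟩
  · intro a
    refine ⟨(blam k A A' u₀)^[k - a.2.val] (bneg k A a), hrinv a, ?_⟩
    set b := (blam k A A' u₀)^[k - a.2.val] (bneg k A a) with hb
    have hca : (blam k A A' u₀)^[k - b.2.val] (bneg k A b) = a := by
      calc (blam k A A' u₀)^[k - b.2.val] (bneg k A b)
          = bcirc k A A' u₀ (0, 0) ((blam k A A' u₀)^[k - b.2.val] (bneg k A b)) :=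
            (hid _).2.symm
        _ = bcirc k A A' u₀ (bcirc k A A' u₀ a b)
              ((blam k A A' u₀)^[k - b.2.val] (bneg k A b)) := by rw [hrinv a]
        _ = bcirc k A A' u₀ a (bcirc k A A' u₀ b
              ((blam k A A' u₀)^[k - b.2.val] (bneg k A b))) := hassoc _ _ _
        _ = bcirc k A A' u₀ a (0, 0) := by rw [hrinv b]
        _ = a := (hid a).1
    rw [← hca]
    exact hrinv b
  · intro a b c
    calc bcirc k A A' u₀ a (badd k A b c)
        = badd k A a (badd k A ((blam k A A' u₀)^[a.2.val] b)
            ((blam k A A' u₀)^[a.2.val] c)) := by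
          show badd k A a ((blam k A A' u₀)^[a.2.val] (badd k A b c)) = _
          rw [blam_iter_add k A A' u₀ hcomm hAk]
      _ = badd k A (badd k A a ((blam k A A' u₀)^[a.2.val] b))
            ((blam k A A' u₀)^[a.2.val] c) := (badd_assoc k A hAk _ _ _).symm
      _ = badd k A (badd k A a ((blam k A A' u₀)^[a.2.val] b))
            (badd k A (0, 0) ((blam k A A' u₀)^[a.2.val] c)) := by
          rw [badd_zero_left]
      _ = badd k A (badd k A a ((blam k A A' u₀)^[a.2.val] b))
            (badd k A (badd k A (bneg k A a) a) ((blam k A A' u₀)^[a.2.val] c)) := by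
          rw [badd_neg_left k A hAk]
      _ = badd k A (badd k A a ((blam k A A' u₀)^[a.2.val] b))
            (badd k A (bneg k A a) (badd k A a ((blam k A A' u₀)^[a.2.val] c))) := by
          rw [badd_assoc k A hAk (bneg k A a) a ((blam k A A' u₀)^[a.2.val] c)]
      _ = badd k A (badd k A (badd k A a ((blam k A A' u₀)^[a.2.val] b)) (bneg k A a))
            (badd k A a ((blam k A A' u₀)^[a.2.val] c)) := (badd_assoc k A hAk _ _ _).symm
      _ = badd k A (badd k A (bcirc k A A' u₀ a b) (bneg k A a)) (bcirc k A A' u₀ a c) := rfl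
end

section
/- Let V be a (possibly non-abelian) group written additively, let A, A' be automorphisms of V, let u₀ ∈ V, and set v_n = u₀ − A^n(u₀) for every n ≥ 0 (so v₀ = 0 and v₁ = u₀ − A(u₀)). Assume that A(A'(A^{-1}(A'^{-1}(v)))) = −v₁ + v + v₁ for all v ∈ V. Then v_n + A^n(A'(w)) = A'(A^n(w)) + v_n for all w ∈ V and all n ≥ 0. -/
/-- Let `V` be a (possibly non-abelian) group written additively, `A, A'`
automorphisms of `V`, `u₀ ∈ V`, and `v_n = u₀ - A^n u₀`. If the commutator `[A, A']` acts
on `V` as conjugation by `v₁`, then `v_n + A^n (A' w) = A' (A^n w) + v_n` for all `w` and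
all `n ≥ 0`. -/
theorem stmt_12 {V : Type} [AddGroup V] (A A' : AddAut V) (u₀ : V)
    (h : ∀ v : V, A (A' ((-A) ((-A') v))) = -(u₀ - A u₀) + v + (u₀ - A u₀)) :
    ∀ (w : V) (n : ℕ),
      (u₀ - (n • A) u₀) + (n • A) (A' w) = A' ((n • A) w) + (u₀ - (n • A) u₀) := by
  have key : ∀ x : V, (u₀ - A u₀) + A (A' x) = A' (A x) + (u₀ - A u₀) := by
    intro x
    have hx := h (A' (A x))
    simp only [AddAut.neg_def] at hx
    rw [A'.symm_apply_apply, A.symm_apply_apply] at hx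
    rw [hx, ← add_assoc, ← add_assoc, add_neg_cancel, zero_add]
  intro w n
  induction n generalizing w with
  | zero => simp
  | succ n ih =>
    have e1 : ((n+1) • A) (A' w) = (n • A) (A (A' w)) := by rw [succ_nsmul]; rfl
    have e2 : ((n+1) • A) u₀ = (n • A) (A u₀) := by rw [succ_nsmul]; rfl
    have e3 : ((n+1) • A) w = (n • A) (A w) := by rw [succ_nsmul]; rfl
    rw [e1, e2, e3]
    calc u₀ - (n • A) (A u₀) + (n • A) (A (A' w))
        = (u₀ - (n • A) u₀) + (n • A) ((u₀ - A u₀) + A (A' w)) := by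
          simp [map_add, map_sub, sub_eq_add_neg, add_assoc]
      _ = (u₀ - (n • A) u₀) + (n • A) (A' (A w) + (u₀ - A u₀)) := by rw [key]
      _ = ((u₀ - (n • A) u₀) + (n • A) (A' (A w))) + (n • A) (u₀ - A u₀) := by
          rw [map_add, add_assoc]
      _ = (A' ((n • A) (A w)) + (u₀ - (n • A) u₀)) + (n • A) (u₀ - A u₀) := by rw [ih]
      _ = A' ((n • A) (A w)) + (u₀ - (n • A) (A u₀)) := by
          simp [map_sub, sub_eq_add_neg, add_assoc]
end

section
/- Let (X,r) be a finite non-degenerate simple set-theoretic solution of the Yang–Baxter equation with |X| ≥ 2. Then either λ_x = λ_y and ρ_x = ρ_y for all x, y ∈ X (so (X,r) is a Lyubashenko solution), or (X,r) is irretractable. -/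
section Aux

variable {X : Type} {r : X × X → X × X}

private lemma cancel_right {f f' g : X → X} (hg : Function.Surjective g)
    (h : f ∘ g = f' ∘ g) : f = f' := by
  funext b; obtain ⟨a, rfl⟩ := hg b; exact congrFun h a

private lemma cancel_left {f g g' : X → X} (hf : Function.Injective f)
    (h : f ∘ g = f ∘ g') : g = g' := by
  funext b; exact hf (congrFun h b)

private lemma braid_E1 (hBr : IsBraided r) (x y z : X) :
    lambdaMap r (lambdaMap r x y) (lambdaMap r (rhoMap r y x) z) =
      lambdaMap r x (lambdaMap r y z) := by
  have h := congrFun hBr (x, y, z)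
  exact congrArg (fun q : X × X × X => q.1) h

private lemma braid_E3 (hBr : IsBraided r) (x y z : X) :
    rhoMap r z (rhoMap r y x) =
      rhoMap r (rhoMap r z y) (rhoMap r (lambdaMap r y z) x) := by
  have h := congrFun hBr (x, y, z)
  exact congrArg (fun q : X × X × X => q.2.2) h

/-- `λ_{λ_x y} ∘ λ_{ρ_y x} = λ_x ∘ λ_y` as maps. -/
private lemma lam_comp (hBr : IsBraided r) (x y : X) :
    (lambdaMap r (lambdaMap r x y)) ∘ (lambdaMap r (rhoMap r y x)) =
      (lambdaMap r x) ∘ (lambdaMap r y) := by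
  funext z; exact braid_E1 hBr x y z

/-- `ρ_{ρ_y x} ∘ ρ_{λ_x y} = ρ_y ∘ ρ_x` as maps. -/
private lemma rho_comp (hBr : IsBraided r) (x y : X) :
    (rhoMap r (rhoMap r y x)) ∘ (rhoMap r (lambdaMap r x y)) =
      (rhoMap r y) ∘ (rhoMap r x) := by
  funext z; exact (braid_E3 hBr z x y).symm

private lemma retA1 (hBr : IsBraided r) (hNd : Nondegenerate r) {y y' : X} (x : X)
    (hl : lambdaMap r y = lambdaMap r y') (hr : rhoMap r y = rhoMap r y') :
    lambdaMap r (lambdaMap r x y) = lambdaMap r (lambdaMap r x y') := by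
  apply cancel_right (hNd.1 (rhoMap r y x)).surjective
  rw [lam_comp hBr x y, hr, hl, ← lam_comp hBr x y']

private lemma retA2 (hBr : IsBraided r) (hNd : Nondegenerate r) {y y' : X} (x : X)
    (hl : lambdaMap r y = lambdaMap r y') (hr : rhoMap r y = rhoMap r y') :
    rhoMap r (lambdaMap r x y) = rhoMap r (lambdaMap r x y') := by
  apply cancel_left (hNd.2 (rhoMap r y x)).injective
  rw [rho_comp hBr x y, hr, ← rho_comp hBr x y']

private lemma retB1 (hBr : IsBraided r) (hNd : Nondegenerate r) {x x' : X} (y : X)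
    (hl : lambdaMap r x = lambdaMap r x') (hr : rhoMap r x = rhoMap r x') :
    lambdaMap r (rhoMap r y x) = lambdaMap r (rhoMap r y x') := by
  apply cancel_left (hNd.1 (lambdaMap r x y)).injective
  rw [lam_comp hBr x y, hl, ← lam_comp hBr x' y]

private lemma retB2 (hBr : IsBraided r) (hNd : Nondegenerate r) {x x' : X} (y : X)
    (hl : lambdaMap r x = lambdaMap r x') (hr : rhoMap r x = rhoMap r x') :
    rhoMap r (rhoMap r y x) = rhoMap r (rhoMap r y x') := by
  apply cancel_right (hNd.2 (lambdaMap r x y)).surjective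
  rw [rho_comp hBr x y, hr, hl, ← rho_comp hBr x' y]

/-- If `f` is a surjective solution homomorphism from a braided solution, the target is
braided. -/
private lemma braided_of_surj {Y : Type} {s : Y × Y → Y × Y} (hBr : IsBraided r)
    (f : X → Y) (hf : Function.Surjective f) (hhom : IsSolHom r s f) : IsBraided s := by
  set F : X × X × X → Y × Y × Y := fun p => (f p.1, f p.2.1, f p.2.2) with hF
  have h12 : ∀ p, r12 s (F p) = F (r12 r p) := by
    intro p
    show ((s (f p.1, f p.2.1)).1, (s (f p.1, f p.2.1)).2, f p.2.2) =
      (f (r (p.1, p.2.1)).1, f (r (p.1, p.2.1)).2, f p.2.2)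
    rw [← hhom p.1 p.2.1]; rfl
  have h23 : ∀ p, r23 s (F p) = F (r23 r p) := by
    intro p
    show (f p.1, s (f p.2.1, f p.2.2)) = (f p.1, f (r p.2).1, f (r p.2).2)
    rw [← hhom p.2.1 p.2.2]; rfl
  funext q
  obtain ⟨a, ha⟩ := hf q.1
  obtain ⟨b, hb⟩ := hf q.2.1
  obtain ⟨c, hc⟩ := hf q.2.2
  have hq : q = F (a, b, c) := by
    rw [hF]; exact Prod.ext_iff.mpr ⟨ha.symm, Prod.ext_iff.mpr ⟨hb.symm, hc.symm⟩⟩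
  have hbr := congrFun hBr (a, b, c)
  calc (r12 s ∘ r23 s ∘ r12 s) q
      = F ((r12 r ∘ r23 r ∘ r12 r) (a, b, c)) := by
        simp only [hq, Function.comp_apply, h12, h23]
    _ = F ((r23 r ∘ r12 r ∘ r23 r) (a, b, c)) := by rw [hbr]
    _ = (r23 s ∘ r12 s ∘ r23 s) q := by
        simp only [hq, Function.comp_apply, h12, h23]

end Aux

/-- A finite non-degenerate simple solution with `|X| ≥ 2` is either a
Lyubashenko solution (all `λ_x` coincide and all `ρ_x` coincide) or irretractable. -/
theorem stmt_13 {X : Type} [Fintype X] (hX : 2 ≤ Nat.card X)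
    (r : X × X → X × X) (hBr : IsBraided r) (hNd : Nondegenerate r)
    (hsimple : SimpleSolution X r) :
    (∀ x y : X, lambdaMap r x = lambdaMap r y ∧ rhoMap r x = rhoMap r y) ∨
      Irretractable r := by
  classical
  set S : Setoid X :=
    ⟨fun a b => lambdaMap r a = lambdaMap r b ∧ rhoMap r a = rhoMap r b,
     ⟨fun _ => ⟨rfl, rfl⟩, fun h => ⟨h.1.symm, h.2.symm⟩,
      fun h h' => ⟨h.1.trans h'.1, h.2.trans h'.2⟩⟩⟩ with hS
  have key : ∀ (x y x' y' : X), S.r x x' → S.r y y' →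
      S.r (lambdaMap r x y) (lambdaMap r x' y') ∧ S.r (rhoMap r y x) (rhoMap r y' x') := by
    intro x y x' y' hx hy
    refine ⟨⟨?_, ?_⟩, ?_, ?_⟩
    · exact (retA1 hBr hNd x hy.1 hy.2).trans (by rw [congrFun hx.1 y'])
    · exact (retA2 hBr hNd x hy.1 hy.2).trans (by rw [congrFun hx.1 y'])
    · exact (retB1 hBr hNd y hx.1 hx.2).trans (by rw [congrFun hy.2 x'])
    · exact (retB2 hBr hNd y hx.1 hx.2).trans (by rw [congrFun hy.2 x'])
  let Y := Quotient S
  let f : X → Y := fun x => Quotient.mk S x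
  let s : Y × Y → Y × Y := fun p =>
    Quotient.liftOn₂ p.1 p.2
      (fun x y => (Quotient.mk S (lambdaMap r x y), Quotient.mk S (rhoMap r y x)))
      (by
        intro a b a' b' ha hb
        have hk := key a b a' b' ha hb
        exact Prod.ext_iff.mpr ⟨Quotient.sound hk.1, Quotient.sound hk.2⟩)
  have hfsurj : Function.Surjective f := fun q => Quotient.inductionOn q fun a => ⟨a, rfl⟩
  have hhom : IsSolHom r s f := fun x y => rfl
  have hsb : IsBraided s := braided_of_surj hBr f hfsurj hhom
  rcases hsimple.2 Y s f hsb hfsurj hhom with hbij | hone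
  · right
    intro x y hl hr
    exact hbij.1 (Quotient.sound (⟨hl, hr⟩ : S.r x y))
  · left
    intro x y
    have hsub : Subsingleton Y := (Nat.card_eq_one_iff_unique.mp hone).1
    have hfe : f x = f y := Subsingleton.elim _ _
    exact Quotient.exact hfe
end

section
/- Let p be a prime, let F be a finite field with p^n elements, and let m ≥ 1. Suppose a, a' ∈ F satisfy a^m = 1, a'^m = 1, a ≠ 1, and F is generated as a ring by a and a' (equivalently, the subring of F generated by {a, a'} is all of F). Then n ≤ m(m − 1). -/
open Polynomial IntermediateField Module

/-- If a finite field `F` with `p^n` elements is generated as a ring by two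
elements `a, a'` with `a^m = 1`, `a'^m = 1` and `a ≠ 1`, then `n ≤ m (m - 1)`. -/
theorem stmt_14 {F : Type} [Field F] [Fintype F] (p n m : ℕ) (hp : p.Prime)
    (hcard : Fintype.card F = p ^ n) (hm : 1 ≤ m)
    (a a' : F) (ha : a ^ m = 1) (ha' : a' ^ m = 1) (hane : a ≠ 1)
    (hgen : Subring.closure ({a, a'} : Set F) = ⊤) :
    n ≤ m * (m - 1) := by
  haveI : CharP F (ringChar F) := ringChar.charP F
  haveI hq : Fact (ringChar F).Prime := ⟨CharP.char_is_prime F _⟩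
  obtain ⟨k, hk1, hk⟩ := FiniteField.card F (ringChar F)
  have hpq : p = ringChar F := by
    have h1 : ringChar F ∣ p ^ n := by
      rw [← hcard, hk]; exact dvd_pow_self _ (by exact_mod_cast k.ne_zero)
    exact ((Nat.prime_dvd_prime_iff_eq hk1 hp).mp (hk1.dvd_of_dvd_pow h1)).symm
  subst hpq
  set q := ringChar F with hqdef
  letI : Algebra (ZMod q) F := ZMod.algebra _ _
  haveI : FiniteDimensional (ZMod q) F := Module.Finite.of_finite
  have hn : n = finrank (ZMod q) F := by
    have h2 := card_eq_pow_finrank (K := ZMod q) (V := F)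
    rw [ZMod.card, hcard] at h2
    exact Nat.pow_right_injective hp.two_le h2
  set E := IntermediateField.adjoin (ZMod q) ({a} : Set F) with hE
  haveI : FiniteDimensional E F := FiniteDimensional.right (ZMod q) E F
  -- finrank of E over base
  have haE : a ∈ E := subset_adjoin _ _ (Set.mem_singleton a)
  have hfr1 : finrank (ZMod q) E = (minpoly (ZMod q) a).natDegree :=
    IntermediateField.adjoin.finrank (IsIntegral.of_finite _ _)
  -- F = E(a')
  have htop : IntermediateField.adjoin E ({a'} : Set F) = ⊤ := by
    rw [eq_top_iff]
    intro x _
    have hx : x ∈ Subring.closure ({a, a'} : Set F) := hgen ▸ Subring.mem_top x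
    refine Subring.closure_le.mpr ?_ hx
    refine Set.insert_subset_iff.mpr ⟨?_, Set.singleton_subset_iff.mpr ?_⟩
    · exact (IntermediateField.adjoin E ({a'} : Set F)).algebraMap_mem ⟨a, haE⟩
    · exact subset_adjoin _ _ (Set.mem_singleton _)
  have hfr2 : finrank E F = (minpoly E a').natDegree := by
    rw [← IntermediateField.adjoin.finrank (IsIntegral.of_finite E a'), htop, finrank_top']
  -- bound on minpoly of a
  have hb1 : (minpoly (ZMod q) a).natDegree ≤ m - 1 := by
    set g : (ZMod q)[X] := ∑ i ∈ Finset.range m, X ^ i with hg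
    have hgne : g ≠ 0 := (monic_geom_sum_X (by omega)).ne_zero
    have hgev : Polynomial.aeval a g = 0 := by
      have h3 : (∑ i ∈ Finset.range m, a ^ i) * (a - 1) = 0 := by
        rw [geom_sum_mul, ha, sub_self]
      have h4 : (∑ i ∈ Finset.range m, a ^ i) = 0 :=
        (mul_eq_zero.mp h3).resolve_right (fun h => hane (sub_eq_zero.mp h))
      simpa [hg] using h4
    have h5 : (minpoly (ZMod q) a).degree ≤ g.degree :=
      minpoly.degree_le_of_ne_zero _ _ hgne hgev
    have h6 : g.natDegree ≤ m - 1 :=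
      natDegree_sum_le_of_forall_le _ _ (fun i hi => by
        have := Finset.mem_range.mp hi
        simp only [natDegree_X_pow]
        omega)
    exact le_trans (natDegree_le_natDegree h5) h6
  -- bound on minpoly of a' over E
  have hb2 : (minpoly E a').natDegree ≤ m := by
    set h : E[X] := X ^ m - 1 with hh
    have hhm : h.Monic := by
      simpa [hh] using monic_X_pow_sub_C (1 : E) (by omega)
    have hhev : Polynomial.aeval a' h = 0 := by simp [hh, ha']
    have h5 : (minpoly E a').degree ≤ h.degree :=
      minpoly.degree_le_of_ne_zero _ _ hhm.ne_zero hhev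
    have h6 : h.natDegree = m := by
      simpa [hh] using natDegree_X_pow_sub_C (n := m) (r := (1 : E))
    exact le_of_le_of_eq (natDegree_le_natDegree h5) h6
  have htower : finrank (ZMod q) E * finrank E F = finrank (ZMod q) F :=
    finrank_mul_finrank (ZMod q) E F
  calc n = finrank (ZMod q) E * finrank E F := by rw [htower, hn]
    _ ≤ (m - 1) * m := Nat.mul_le_mul (hfr1 ▸ hb1) (hfr2 ▸ hb2)
    _ = m * (m - 1) := Nat.mul_comm _ _
end

section
/- Let n ≥ 5, let X ⊆ Sym(n) be the set of all transpositions of the symmetric group Sym(n), and let c = (1 2) ∈ X. Define r : X × X → X × X by r(s,t) = (c·t·c, t·c·s·c·t), where the products are taken in Sym(n) (note that c·t·c and t·c·s·c·t are again transpositions). Then (X,r) is a non-degenerate simple set-theoretic solution of the Yang–Baxter equation, of cardinality n(n−1)/2, which is neither involutive nor a derived (rack) solution. -/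
/-- The set of transpositions of `Sym(n)`. -/
abbrev Transpositions (n : ℕ) : Type := {f : Equiv.Perm (Fin n) // f.IsSwap}

-- ========== auxiliary lemmas ==========

lemma aux_isSwap_conj {n : ℕ} (g u : Equiv.Perm (Fin n)) (hu : u.IsSwap) :
    (g * u * g⁻¹).IsSwap := by
  obtain ⟨a, b, hab, rfl⟩ := hu
  exact ⟨g a, g b, fun h => hab (g.injective h), (Equiv.swap_apply_apply g a b).symm⟩

lemma aux_swap_sq {n : ℕ} {u : Equiv.Perm (Fin n)} (hu : u.IsSwap) : u * u = 1 := by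
  obtain ⟨a, b, _, rfl⟩ := hu; exact Equiv.swap_mul_self a b

lemma aux_swap_inv {n : ℕ} {u : Equiv.Perm (Fin n)} (hu : u.IsSwap) : u⁻¹ = u :=
  inv_eq_of_mul_eq_one_right (aux_swap_sq hu)

lemma aux_cancel {G : Type*} [Group G] (a : G) (h : a * a = 1) (w : G) : a * (a * w) = w := by
  rw [← mul_assoc, h, one_mul]

lemma aux_swap_eq_of_pair {n : ℕ} {x y z w : Fin n} (hxy : x ≠ y) (_hzw : z ≠ w)
    (h : ({x, y} : Finset (Fin n)) = {z, w}) : Equiv.swap x y = Equiv.swap z w := by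
  have hx : x ∈ ({z, w} : Finset (Fin n)) := by rw [← h]; simp
  have hy : y ∈ ({z, w} : Finset (Fin n)) := by rw [← h]; simp
  simp only [Finset.mem_insert, Finset.mem_singleton] at hx hy
  rcases hx with rfl | rfl
  · rcases hy with rfl | rfl
    · exact absurd rfl hxy
    · rfl
  · rcases hy with rfl | rfl
    · exact Equiv.swap_comm _ _
    · exact absurd rfl hxy

lemma aux_card (n : ℕ) : Nat.card (Transpositions n) = n * (n - 1) / 2 := by
  have hb : Function.Bijective
      (fun t : Transpositions n => (⟨t.1.support,
        Equiv.Perm.card_support_eq_two.mpr t.2⟩ : {s : Finset (Fin n) // s.card = 2})) := by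
    constructor
    · rintro ⟨u, hu⟩ ⟨v, hv⟩ h
      simp only [Subtype.mk.injEq] at h
      obtain ⟨x, y, hxy, rfl⟩ := hu
      obtain ⟨z, w, hzw, rfl⟩ := hv
      rw [Equiv.Perm.support_swap hxy, Equiv.Perm.support_swap hzw] at h
      exact Subtype.ext (aux_swap_eq_of_pair hxy hzw h)
    · rintro ⟨s, hs⟩
      obtain ⟨x, y, hxy, rfl⟩ := Finset.card_eq_two.mp hs
      exact ⟨⟨Equiv.swap x y, x, y, hxy, rfl⟩,
        Subtype.ext (Equiv.Perm.support_swap hxy)⟩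
  rw [Nat.card_eq_of_bijective _ hb, Nat.card_eq_fintype_card, Fintype.card_finset_len,
    Fintype.card_fin, Nat.choose_two_right]

lemma aux_map3 {n : ℕ} (p q r' p' q' r'' : Fin n) (hpq : p ≠ q) (hpr : p ≠ r') (hqr : q ≠ r')
    (hpq' : p' ≠ q') (hpr' : p' ≠ r'') (hqr' : q' ≠ r'') :
    ∃ g : Equiv.Perm (Fin n), g p = p' ∧ g q = q' ∧ g r' = r'' := by
  set g1 := Equiv.swap p p' with hg1
  set g2 := Equiv.swap (g1 q) q' with hg2
  set g3 := Equiv.swap (g2 (g1 r')) r'' with hg3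
  have h1p : g1 p = p' := Equiv.swap_apply_left _ _
  have hq1 : g1 q ≠ p' := fun h => hpq (g1.injective (h1p.trans h.symm))
  have h2p : g2 p' = p' := Equiv.swap_apply_of_ne_of_ne (Ne.symm hq1) hpq'
  have h2q : g2 (g1 q) = q' := Equiv.swap_apply_left _ _
  have hr1 : g2 (g1 r') ≠ p' := by
    intro h
    have hgp : g2 (g1 p) = p' := by rw [h1p, h2p]
    exact hpr (g1.injective (g2.injective (hgp.trans h.symm)))
  have hr2 : g2 (g1 r') ≠ q' := fun h => hqr (g1.injective (g2.injective (h2q.trans h.symm)))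
  have h3p : g3 p' = p' := Equiv.swap_apply_of_ne_of_ne (Ne.symm hr1) hpr'
  have h3q : g3 q' = q' := Equiv.swap_apply_of_ne_of_ne (Ne.symm hr2) hqr'
  have h3r : g3 (g2 (g1 r')) = r'' := Equiv.swap_apply_left _ _
  refine ⟨g3 * g2 * g1, ?_, ?_, ?_⟩ <;> simp only [Equiv.Perm.mul_apply]
  · rw [h1p, h2p, h3p]
  · rw [h2q, h3q]
  · rw [h3r]

lemma aux_exists_fifth {n : ℕ} (hn : 5 ≤ n) (i j k l : Fin n) :
    ∃ m : Fin n, m ≠ i ∧ m ≠ j ∧ m ≠ k ∧ m ≠ l := by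
  have hcard : (({i, j, k, l} : Finset (Fin n))ᶜ).Nonempty := by
    rw [← Finset.card_pos, Finset.card_compl]
    have h4 : ({i, j, k, l} : Finset (Fin n)).card ≤ 4 := by
      calc ({i, j, k, l} : Finset (Fin n)).card
          ≤ ({j, k, l} : Finset (Fin n)).card + 1 := Finset.card_insert_le _ _
        _ ≤ (({k, l} : Finset (Fin n)).card + 1) + 1 := by
            exact Nat.add_le_add_right (Finset.card_insert_le _ _) 1
        _ ≤ ((({l} : Finset (Fin n)).card + 1) + 1) + 1 := by
            exact Nat.add_le_add_right (Nat.add_le_add_right (Finset.card_insert_le _ _) 1) 1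
        _ = 4 := by rw [Finset.card_singleton]
    rw [Fintype.card_fin]
    omega
  obtain ⟨m, hm⟩ := hcard
  simp only [Finset.mem_compl, Finset.mem_insert, Finset.mem_singleton, not_or] at hm
  exact ⟨m, hm.1, hm.2.1, hm.2.2.1, hm.2.2.2⟩
lemma aux_const {n : ℕ} (hn : 5 ≤ n) (c : Equiv.Perm (Fin n)) (hcs : c.IsSwap)
    (r : Transpositions n × Transpositions n → Transpositions n × Transpositions n)
    (hr : ∀ s t : Transpositions n,
      ((r (s, t)).1 : Equiv.Perm (Fin n)) = c * (t : Equiv.Perm (Fin n)) * c ∧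
      ((r (s, t)).2 : Equiv.Perm (Fin n)) =
        (t : Equiv.Perm (Fin n)) * c * (s : Equiv.Perm (Fin n)) * c *
          (t : Equiv.Perm (Fin n)))
    {Y : Type} (s : Y × Y → Y × Y) (f : Transpositions n → Y)
    (hsol : IsSolHom r s f) (a b : Transpositions n) (hab : a ≠ b) (hfab : f a = f b) :
    ∀ u v : Transpositions n, f u = f v := by
  have hc1 : c * c = 1 := aux_swap_sq hcs
  have hcInv : c⁻¹ = c := aux_swap_inv hcs
  have hs1 : ∀ x y, f ((r (x, y)).1) = (s (f x, f y)).1 := by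
    intro x y
    have := congrArg Prod.fst (hsol x y)
    simpa using this
  have hs2 : ∀ x y, f ((r (x, y)).2) = (s (f x, f y)).2 := by
    intro x y
    have := congrArg Prod.snd (hsol x y)
    simpa using this
  set Q : Equiv.Perm (Fin n) → Equiv.Perm (Fin n) → Prop :=
    fun u v => ∀ (hu : u.IsSwap) (hv : v.IsSwap), f ⟨u, hu⟩ = f ⟨v, hv⟩ with hQ
  have Qrefl : ∀ u, Q u u := fun u hu hv => rfl
  have Qsymm : ∀ {u v}, Q u v → Q v u := fun h hu hv => (h hv hu).symm
  have Qtrans : ∀ {u v w}, v.IsSwap → Q u v → Q v w → Q u w :=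
    fun hv h1 h2 hu hw => (h1 hu hv).trans (h2 hv hw)
  have isSwap_cuc : ∀ {u : Equiv.Perm (Fin n)}, u.IsSwap → (c * u * c).IsSwap := by
    intro u hu
    have := aux_isSwap_conj c u hu
    rwa [hcInv] at this
  -- main structural rules
  have Qrho : ∀ u v w w' (hu : u.IsSwap) (hv : v.IsSwap) (hw : w.IsSwap) (hw' : w'.IsSwap),
      Q u v → Q w w' → Q (w * c * u * c * w) (w' * c * v * c * w') := by
    intro u v w w' hu hv hw hw' huv hww'
    intro h1 h2
    have e1 : (⟨w * c * u * c * w, h1⟩ : Transpositions n) = (r (⟨u, hu⟩, ⟨w, hw⟩)).2 :=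
      Subtype.ext (hr ⟨u, hu⟩ ⟨w, hw⟩).2.symm
    have e2 : (⟨w' * c * v * c * w', h2⟩ : Transpositions n) = (r (⟨v, hv⟩, ⟨w', hw'⟩)).2 :=
      Subtype.ext (hr ⟨v, hv⟩ ⟨w', hw'⟩).2.symm
    rw [e1, e2, hs2, hs2, huv hu hv, hww' hw hw']
  have Qlam : ∀ u v (hu : u.IsSwap) (hv : v.IsSwap),
      Q u v → Q (c * u * c) (c * v * c) := by
    intro u v hu hv huv h1 h2
    have e1 : (⟨c * u * c, h1⟩ : Transpositions n) = (r (a, ⟨u, hu⟩)).1 :=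
      Subtype.ext (hr a ⟨u, hu⟩).1.symm
    have e2 : (⟨c * v * c, h2⟩ : Transpositions n) = (r (a, ⟨v, hv⟩)).1 :=
      Subtype.ext (hr a ⟨v, hv⟩).1.symm
    rw [e1, e2, hs1, hs1, huv hu hv]
  have cuc_cancel : ∀ (t' w : Equiv.Perm (Fin n)), t' * c * (c * w * c) * c * t' = t' * w * t' := by
    intro t' w
    simp [mul_assoc, aux_cancel c hc1]
  have Qconj1 : ∀ (x y : Fin n), x ≠ y → ∀ u v (hu : u.IsSwap) (hv : v.IsSwap),
      Q u v → Q (Equiv.swap x y * u * Equiv.swap x y) (Equiv.swap x y * v * Equiv.swap x y) := by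
    intro x y hxy u v hu hv huv
    have ht : (Equiv.swap x y).IsSwap := ⟨x, y, hxy, rfl⟩
    have h2 := Qrho (c * u * c) (c * v * c) (Equiv.swap x y) (Equiv.swap x y)
      (isSwap_cuc hu) (isSwap_cuc hv) ht ht (Qlam u v hu hv huv) (Qrefl _)
    rwa [cuc_cancel, cuc_cancel] at h2
  have Qconj : ∀ (g : Equiv.Perm (Fin n)) u v (hu : u.IsSwap) (hv : v.IsSwap),
      Q u v → Q (g * u * g⁻¹) (g * v * g⁻¹) := by
    intro g
    refine Equiv.Perm.swap_induction_on g ?_ ?_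
    · intro u v hu hv huv; simpa using huv
    · intro g' x y hxy ih u v hu hv huv
      have h1 := ih u v hu hv huv
      have h2 := Qconj1 x y hxy _ _ (aux_isSwap_conj g' u hu) (aux_isSwap_conj g' v hv) h1
      have e : ∀ w : Equiv.Perm (Fin n),
          Equiv.swap x y * (g' * w * g'⁻¹) * Equiv.swap x y
            = (Equiv.swap x y * g') * w * (Equiv.swap x y * g')⁻¹ := by
        intro w
        rw [mul_inv_rev, Equiv.swap_inv]
        group
      rwa [e, e] at h2
  have QconjSwap : ∀ (g : Equiv.Perm (Fin n)) (x y z w : Fin n), x ≠ y → z ≠ w →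
      Q (Equiv.swap x y) (Equiv.swap z w) →
      Q (Equiv.swap (g x) (g y)) (Equiv.swap (g z) (g w)) := by
    intro g x y z w hxy hzw h
    have := Qconj g _ _ ⟨x, y, hxy, rfl⟩ ⟨z, w, hzw, rfl⟩ h
    rwa [← Equiv.swap_apply_apply, ← Equiv.swap_apply_apply] at this
  -- base relation
  have Qab : Q (a : Equiv.Perm (Fin n)) (b : Equiv.Perm (Fin n)) := by
    intro hu hv
    have e1 : (⟨(a : Equiv.Perm (Fin n)), hu⟩ : Transpositions n) = a := Subtype.ext rfl
    have e2 : (⟨(b : Equiv.Perm (Fin n)), hv⟩ : Transpositions n) = b := Subtype.ext rfl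
    rw [e1, e2]; exact hfab
  -- Step 1: produce a pair sharing a point
  obtain ⟨p₀, q₀, r₀, hq₀r₀, hp₀q₀, hp₀r₀, Qbase⟩ :
      ∃ p q r' : Fin n, q ≠ r' ∧ p ≠ q ∧ p ≠ r' ∧ Q (Equiv.swap p q) (Equiv.swap p r') := by
    obtain ⟨i, j, hij, haij⟩ := a.2
    obtain ⟨k, l, hkl, hbkl⟩ := b.2
    have hvalne : (a : Equiv.Perm (Fin n)) ≠ (b : Equiv.Perm (Fin n)) :=
      fun h => hab (Subtype.ext h)
    have Qab' : Q (Equiv.swap i j) (Equiv.swap k l) := by rw [← haij, ← hbkl]; exact Qab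
    by_cases hik : i = k
    · subst hik
      have hjl : j ≠ l := by
        intro h; apply hvalne; rw [haij, hbkl, h]
      exact ⟨i, j, l, hjl, hij, hkl, Qab'⟩
    · by_cases hil : i = l
      · subst hil
        have hjk : j ≠ k := by
          intro h; apply hvalne; rw [haij, hbkl, h]; exact Equiv.swap_comm _ _
        refine ⟨i, j, k, hjk, hij, fun h => hik h, ?_⟩
        rw [Equiv.swap_comm k i] at Qab'
        exact Qab'
      · by_cases hjk : j = k
        · subst hjk
          have hil' : i ≠ l := hil
          refine ⟨j, i, l, hil', Ne.symm hij, hkl, ?_⟩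
          rw [Equiv.swap_comm i j] at Qab'
          exact Qab'
        · by_cases hjl : j = l
          · subst hjl
            refine ⟨j, i, k, fun h => hik h, Ne.symm hij, Ne.symm hkl, ?_⟩
            rw [Equiv.swap_comm i j, Equiv.swap_comm k j] at Qab'
            exact Qab'
          · -- disjoint case
            obtain ⟨m, hmi, hmj, hmk, hml⟩ := aux_exists_fifth hn i j k l
            have hwm : (Equiv.swap i m).IsSwap := ⟨i, m, Ne.symm hmi, rfl⟩
            have hQ2 := Qrho (c * Equiv.swap i m * c) (c * Equiv.swap i m * c)
              (a : Equiv.Perm (Fin n)) (b : Equiv.Perm (Fin n))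
              (isSwap_cuc hwm) (isSwap_cuc hwm) a.2 b.2 (Qrefl _) Qab
            rw [cuc_cancel, cuc_cancel] at hQ2
            -- a * swap i m * a = swap j m ; b * swap i m * b = swap i m
            have ea : (a : Equiv.Perm (Fin n)) * Equiv.swap i m * (a : Equiv.Perm (Fin n))
                = Equiv.swap j m := by
              have : (a : Equiv.Perm (Fin n)) * Equiv.swap i m * (a : Equiv.Perm (Fin n))⁻¹
                  = Equiv.swap ((a : Equiv.Perm (Fin n)) i) ((a : Equiv.Perm (Fin n)) m) :=
                (Equiv.swap_apply_apply _ i m).symm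
              rw [aux_swap_inv a.2] at this
              rw [this, haij, Equiv.swap_apply_left,
                Equiv.swap_apply_of_ne_of_ne hmi hmj]
            have eb : (b : Equiv.Perm (Fin n)) * Equiv.swap i m * (b : Equiv.Perm (Fin n))
                = Equiv.swap i m := by
              have : (b : Equiv.Perm (Fin n)) * Equiv.swap i m * (b : Equiv.Perm (Fin n))⁻¹
                  = Equiv.swap ((b : Equiv.Perm (Fin n)) i) ((b : Equiv.Perm (Fin n)) m) :=
                (Equiv.swap_apply_apply _ i m).symm
              rw [aux_swap_inv b.2] at this
              rw [this, hbkl, Equiv.swap_apply_of_ne_of_ne hik hil,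
                Equiv.swap_apply_of_ne_of_ne hmk hml]
            rw [ea, eb] at hQ2
            refine ⟨m, j, i, Ne.symm hij ∘ Eq.symm ∘ Eq.symm, hmj, hmi, ?_⟩
            · rw [Equiv.swap_comm m j, Equiv.swap_comm m i]
              exact hQ2
  -- Step 2: all pairs sharing a point
  have QA : ∀ (p q r' : Fin n), p ≠ q → p ≠ r' → q ≠ r' →
      Q (Equiv.swap p q) (Equiv.swap p r') := by
    intro p q r' hpq hpr hqr
    obtain ⟨g, hgp, hgq, hgr⟩ := aux_map3 p₀ q₀ r₀ p q r' hp₀q₀ hp₀r₀ hq₀r₀ hpq hpr hqr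
    have := QconjSwap g p₀ q₀ p₀ r₀ hp₀q₀ hp₀r₀ Qbase
    rwa [hgp, hgq, hgr] at this
  -- Step 3: all pairs
  have Qall : ∀ (x y z w : Fin n), x ≠ y → z ≠ w →
      Q (Equiv.swap x y) (Equiv.swap z w) := by
    intro x y z w hxy hzw
    by_cases hxz : x = z
    · subst hxz
      by_cases hyw : y = w
      · subst hyw; exact Qrefl _
      · exact QA x y w hxy hzw hyw
    · by_cases hxw : x = w
      · subst hxw
        rw [Equiv.swap_comm z x]
        by_cases hyz : y = z
        · subst hyz; rw [Equiv.swap_comm x y]; exact Qrefl _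
        · exact QA x y z hxy (Ne.symm hzw) hyz
      · by_cases hyz : y = z
        · subst hyz
          rw [Equiv.swap_comm x y]
          exact QA y x w (Ne.symm hxy) hzw hxw
        · by_cases hyw : y = w
          · subst hyw
            rw [Equiv.swap_comm x y, Equiv.swap_comm z y]
            exact QA y x z (Ne.symm hxy) (Ne.symm hzw) hxz
          · refine Qtrans (v := Equiv.swap x z) ⟨x, z, hxz, rfl⟩
              (QA x y z hxy hxz hyz) ?_
            rw [Equiv.swap_comm x z]
            exact QA z x w (Ne.symm hxz) hzw hxw
  -- conclude
  intro u v
  obtain ⟨x, y, hxy, hu⟩ := u.2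
  obtain ⟨z, w, hzw, hv⟩ := v.2
  have h := Qall x y z w hxy hzw
  rw [← hu, ← hv] at h
  have eu : u = ⟨(u : Equiv.Perm (Fin n)), u.2⟩ := rfl
  have ev : v = ⟨(v : Equiv.Perm (Fin n)), v.2⟩ := rfl
  rw [eu, ev]
  exact h u.2 v.2

/-- For `n ≥ 5`, `X` the set of transpositions of `Sym(n)` and
`c = (1 2)`, the map `r (s, t) = (c t c, t c s c t)` is a non-degenerate simple solution
of the Yang--Baxter equation of cardinality `n (n - 1) / 2`, which is neither involutive
nor derived (a rack solution). -/
theorem stmt_16 (n : ℕ) (hn : 5 ≤ n)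
    (c : Equiv.Perm (Fin n))
    (hc : c = Equiv.swap (⟨0, by omega⟩ : Fin n) (⟨1, by omega⟩ : Fin n))
    (r : Transpositions n × Transpositions n → Transpositions n × Transpositions n)
    (hr : ∀ s t : Transpositions n,
      ((r (s, t)).1 : Equiv.Perm (Fin n)) = c * (t : Equiv.Perm (Fin n)) * c ∧
      ((r (s, t)).2 : Equiv.Perm (Fin n)) =
        (t : Equiv.Perm (Fin n)) * c * (s : Equiv.Perm (Fin n)) * c *
          (t : Equiv.Perm (Fin n))) :
    IsBraided r ∧ Nondegenerate r ∧ SimpleSolution (Transpositions n) r ∧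
      Nat.card (Transpositions n) = n * (n - 1) / 2 ∧
      r ∘ r ≠ id ∧ ¬ (∀ x : Transpositions n, lambdaMap r x = id) := by
  have i0 : Fin n := ⟨0, by omega⟩
  have h01 : (⟨0, by omega⟩ : Fin n) ≠ ⟨1, by omega⟩ := by simp [Fin.ext_iff]
  have h02 : (⟨0, by omega⟩ : Fin n) ≠ ⟨2, by omega⟩ := by simp [Fin.ext_iff]
  have h12 : (⟨1, by omega⟩ : Fin n) ≠ ⟨2, by omega⟩ := by simp [Fin.ext_iff]
  have hcs : c.IsSwap := ⟨_, _, h01, hc⟩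
  have hc1 : c * c = 1 := aux_swap_sq hcs
  have hcInv : c⁻¹ = c := aux_swap_inv hcs
  have rv1 : ∀ s t : Transpositions n, ((r (s, t)).1 : Equiv.Perm (Fin n)) = c * t * c :=
    fun s t => (hr s t).1
  have rv2 : ∀ s t : Transpositions n,
      ((r (s, t)).2 : Equiv.Perm (Fin n)) = t * c * s * c * t :=
    fun s t => (hr s t).2
  -- braiding
  have hbraid : IsBraided r := by
    funext p
    obtain ⟨x, y, z⟩ := p
    simp only [Function.comp_apply, r12, r23]
    refine Prod.ext (Subtype.ext ?_) (Prod.ext (Subtype.ext ?_) (Subtype.ext ?_)) <;>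
      simp only [rv1, rv2] <;>
      simp [mul_assoc, hc1, aux_cancel c hc1, aux_cancel _ (aux_swap_sq x.2),
        aux_cancel _ (aux_swap_sq y.2), aux_cancel _ (aux_swap_sq z.2),
        aux_swap_sq x.2, aux_swap_sq y.2, aux_swap_sq z.2]
  -- non-degeneracy
  have hnondeg : Nondegenerate r := by
    constructor
    · intro x
      apply Function.Involutive.bijective
      intro t
      apply Subtype.ext
      simp only [lambdaMap, rv1]
      simp [mul_assoc, aux_cancel c hc1, hc1]
    · intro y
      apply Function.bijective_iff_has_inverse.mpr
      refine ⟨fun x => ⟨(c * (y : Equiv.Perm (Fin n))) * (x : Equiv.Perm (Fin n)) *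
        (c * (y : Equiv.Perm (Fin n)))⁻¹, aux_isSwap_conj _ _ x.2⟩, ?_, ?_⟩
      · intro x
        apply Subtype.ext
        simp only [rhoMap, rv2]
        simp [mul_inv_rev, hcInv, aux_swap_inv y.2, mul_assoc, aux_cancel c hc1,
          aux_cancel _ (aux_swap_sq y.2), hc1, aux_swap_sq y.2]
      · intro x
        apply Subtype.ext
        simp only [rhoMap, rv2]
        simp [mul_inv_rev, hcInv, aux_swap_inv y.2, mul_assoc, aux_cancel c hc1,
          aux_cancel _ (aux_swap_sq y.2), hc1, aux_swap_sq y.2]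
  -- cardinality
  have hcard : Nat.card (Transpositions n) = n * (n - 1) / 2 := aux_card n
  -- simplicity
  have hsimple : SimpleSolution (Transpositions n) r := by
    constructor
    · rw [hcard]
      have h20 : 5 * 4 ≤ n * (n - 1) := Nat.mul_le_mul hn (by omega)
      omega
    · intro Y s f _ hsurj hsol
      by_cases hinj : Function.Injective f
      · exact Or.inl ⟨hinj, hsurj⟩
      · right
        obtain ⟨a, b, hfe, hne⟩ := Function.not_injective_iff.mp hinj
        have hconst := aux_const hn c hcs r hr s f hsol a b hne hfe
        rw [Nat.card_eq_one_iff_unique]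
        constructor
        · constructor
          intro y1 y2
          obtain ⟨x1, rfl⟩ := hsurj y1
          obtain ⟨x2, rfl⟩ := hsurj y2
          exact hconst x1 x2
        · exact ⟨f a⟩
  -- not involutive
  have hninv : r ∘ r ≠ id := by
    intro hcon
    set σv : Equiv.Perm (Fin n) := Equiv.swap ⟨0, by omega⟩ ⟨2, by omega⟩ with hσv
    have hσ : σv.IsSwap := ⟨_, _, h02, rfl⟩
    set σ : Transpositions n := ⟨σv, hσ⟩ with hσdef
    have h1 : r (r (σ, σ)) = (σ, σ) := by
      have := congrFun hcon (σ, σ)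
      simpa using this
    have h2 : ((r (r (σ, σ))).1 : Equiv.Perm (Fin n)) = σv := by rw [h1]
    have h3 : ((r (r (σ, σ))).1 : Equiv.Perm (Fin n)) =
        c * ((r (σ, σ)).2 : Equiv.Perm (Fin n)) * c := (hr (r (σ, σ)).1 (r (σ, σ)).2).1
    rw [h3, rv2 σ σ] at h2
    have h5 := congrArg (fun π : Equiv.Perm (Fin n) => π ⟨0, by omega⟩) h2
    rw [hc] at h5
    simp only [Equiv.Perm.mul_apply, hσdef, hσv] at h5
    simp [Equiv.swap_apply_def, Fin.ext_iff] at h5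
  -- not derived
  have hnder : ¬ (∀ x : Transpositions n, lambdaMap r x = id) := by
    intro hder
    set σv : Equiv.Perm (Fin n) := Equiv.swap ⟨0, by omega⟩ ⟨2, by omega⟩ with hσv
    have hσ : σv.IsSwap := ⟨_, _, h02, rfl⟩
    set σ : Transpositions n := ⟨σv, hσ⟩ with hσdef
    have h1 : (r (σ, σ)).1 = σ := congrFun (hder σ) σ
    have h2 : ((r (σ, σ)).1 : Equiv.Perm (Fin n)) = σv := by rw [h1]
    rw [rv1 σ σ] at h2
    have h5 := congrArg (fun π : Equiv.Perm (Fin n) => π ⟨1, by omega⟩) h2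
    rw [hc] at h5
    simp only [Equiv.Perm.mul_apply, hσdef, hσv] at h5
    simp [Equiv.swap_apply_def, Fin.ext_iff] at h5
  exact ⟨hbraid, hnondeg, hsimple, hcard, hninv, hnder⟩
end

section
/- Let p be an odd prime, let D be the dihedral group of order 2p, let X ⊆ D be the set of its p reflections (equivalently, the elements of order 2), and fix c ∈ X. Define r : X × X → X × X by r(s,t) = (c·t·c, t·c·s·c·t), products taken in D (note that c·t·c and t·c·s·c·t are again reflections). Then (X,r) is a non-degenerate simple set-theoretic solution of the Yang–Baxter equation of cardinality p. -/
/-- The set of reflections (elements of order `2`) of the dihedral group of order `2p`. -/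
abbrev Reflections (p : ℕ) : Type := {g : DihedralGroup p // orderOf g = 2}

open DihedralGroup in
lemma refl_exists_sr {p : ℕ} (hp : p.Prime) (hodd : Odd p)
    (g : {g : DihedralGroup p // orderOf g = 2}) :
    ∃ i : ZMod p, (g : DihedralGroup p) = sr i := by
  haveI := Fact.mk hp
  obtain ⟨g, hg⟩ := g
  cases g with
  | r i =>
    exfalso
    have h2 : (DihedralGroup.r i) ^ 2 = 1 := by
      rw [← hg]; exact pow_orderOf_eq_one _
    rw [sq, r_mul_r, one_def] at h2
    have hii : i + i = 0 := by injection h2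
    have h2ne : (2 : ZMod p) ≠ 0 := by
      intro h
      have : (p : ℕ) ∣ 2 :=
        (ZMod.natCast_eq_zero_iff 2 p).mp (by exact_mod_cast h)
      have hle := Nat.le_of_dvd (by norm_num) this
      have h2le := hp.two_le
      have : p = 2 := by omega
      subst this
      norm_num [Nat.odd_iff] at hodd
    have hi0 : i = 0 := by
      have : (2 : ZMod p) * i = 0 := by ring_nf; linear_combination hii
      rcases mul_eq_zero.mp this with h | h
      · exact absurd h h2ne
      · exact h
    subst hi0
    rw [← one_def] at hg
    simp at hg
  | sr i => exact ⟨i, rfl⟩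

/-- For an odd prime `p`, `X` the set of reflections of the dihedral group
of order `2p`, and a fixed reflection `c`, the map `r (s, t) = (c t c, t c s c t)` is a
non-degenerate simple solution of the Yang--Baxter equation of cardinality `p`. -/
theorem stmt_17 (p : ℕ) (hp : p.Prime) (hodd : Odd p)
    (c : Reflections p)
    (r : Reflections p × Reflections p → Reflections p × Reflections p)
    (hr : ∀ s t : Reflections p,
      ((r (s, t)).1 : DihedralGroup p) =
        (c : DihedralGroup p) * (t : DihedralGroup p) * (c : DihedralGroup p) ∧
      ((r (s, t)).2 : DihedralGroup p) =
        (t : DihedralGroup p) * (c : DihedralGroup p) * (s : DihedralGroup p) *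
          (c : DihedralGroup p) * (t : DihedralGroup p)) :
    IsBraided r ∧ Nondegenerate r ∧ SimpleSolution (Reflections p) r ∧
      Nat.card (Reflections p) = p := by
  haveI := Fact.mk hp
  have h2ne : (2 : ZMod p) ≠ 0 := by
    intro h
    have : (p : ℕ) ∣ 2 :=
      (ZMod.natCast_eq_zero_iff 2 p).mp (by exact_mod_cast h)
    have hle := Nat.le_of_dvd (by norm_num) this
    have h2le := hp.two_le
    have : p = 2 := by omega
    subst this
    norm_num [Nat.odd_iff] at hodd
  set F : ZMod p → Reflections p := fun i => ⟨DihedralGroup.sr i, DihedralGroup.orderOf_sr i⟩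
    with hFdef
  have hFinj : Function.Injective F := by
    intro i j h
    have : DihedralGroup.sr i = DihedralGroup.sr j := congrArg Subtype.val h
    injection this
  have hFsurj : Function.Surjective F := by
    intro x
    obtain ⟨i, hi⟩ := refl_exists_sr hp hodd x
    exact ⟨i, Subtype.ext hi.symm⟩
  obtain ⟨a, ha⟩ := refl_exists_sr hp hodd c
  -- coordinate formula
  have hF : ∀ i j : ZMod p, r (F i, F j) = (F (2*a - j), F (i + 2*j - 2*a)) := by
    intro i j
    obtain ⟨h1, h2⟩ := hr (F i) (F j)
    refine Prod.ext (Subtype.ext ?_) (Subtype.ext ?_)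
    · rw [h1, ha]
      show DihedralGroup.sr a * DihedralGroup.sr j * DihedralGroup.sr a
          = DihedralGroup.sr (2*a - j)
      rw [DihedralGroup.sr_mul_sr, DihedralGroup.r_mul_sr]
      congr 1; ring
    · rw [h2, ha]
      show DihedralGroup.sr j * DihedralGroup.sr a * DihedralGroup.sr i *
          DihedralGroup.sr a * DihedralGroup.sr j = DihedralGroup.sr (i + 2*j - 2*a)
      rw [DihedralGroup.sr_mul_sr, DihedralGroup.r_mul_sr, DihedralGroup.sr_mul_sr,
        DihedralGroup.r_mul_sr]
      congr 1; ring
  have hFeq : ∀ u v : ZMod p, u = v → F u = F v := fun u v h => by rw [h]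
  constructor
  · -- braided
    funext x
    obtain ⟨x, y, z⟩ := x
    obtain ⟨i, rfl⟩ := hFsurj x
    obtain ⟨j, rfl⟩ := hFsurj y
    obtain ⟨k, rfl⟩ := hFsurj z
    simp only [Function.comp_apply, r12, r23, hF]
    refine Prod.ext (hFeq _ _ (by ring)) (Prod.ext (hFeq _ _ (by ring)) (hFeq _ _ (by ring)))
  refine ⟨⟨?_, ?_⟩, ⟨?_, ?_⟩, ?_⟩
  · -- lambda bijective
    intro x
    obtain ⟨i, rfl⟩ := hFsurj x
    have hinv : Function.Involutive (lambdaMap r (F i)) := by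
      intro y
      obtain ⟨j, rfl⟩ := hFsurj y
      show (r (F i, (r (F i, F j)).1)).1 = F j
      rw [hF, hF]
      exact hFeq _ _ (by ring)
    exact hinv.bijective
  · -- rho bijective
    intro y
    obtain ⟨j, rfl⟩ := hFsurj y
    constructor
    · intro x x' h
      obtain ⟨i, rfl⟩ := hFsurj x
      obtain ⟨i', rfl⟩ := hFsurj x'
      have h' : (r (F i, F j)).2 = (r (F i', F j)).2 := h
      rw [hF, hF] at h'
      have := hFinj h'
      exact hFeq _ _ (by linear_combination this)
    · intro y'
      obtain ⟨k, rfl⟩ := hFsurj y'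
      refine ⟨F (k - 2*j + 2*a), ?_⟩
      show (r (F (k - 2*j + 2*a), F j)).2 = F k
      rw [hF]
      exact hFeq _ _ (by ring)
  · -- 2 ≤ Nat.card
    have : Nat.card (Reflections p) = p :=
      (Nat.card_eq_of_bijective F ⟨hFinj, hFsurj⟩).symm.trans (Nat.card_zmod p)
    rw [this]; exact hp.two_le
  · -- simplicity
    intro Y s f hs hfsurj hhom
    by_cases hinj : Function.Injective f
    · exact Or.inl ⟨hinj, hfsurj⟩
    right
    rw [Function.not_injective_iff] at hinj
    obtain ⟨x, x', hfx, hxx'⟩ := hinj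
    obtain ⟨u, rfl⟩ := hFsurj x
    obtain ⟨u', rfl⟩ := hFsurj x'
    set g : ZMod p → Y := fun i => f (F i) with hgdef
    have hguu' : g u = g u' := hfx
    set d : ZMod p := u' - u with hddef
    have hd : d ≠ 0 := sub_ne_zero.mpr (fun h => hxx' (by rw [h]))
    -- one step
    have hstep : ∀ x : ZMod p, g x = g (x + d) := by
      intro x
      set v : ZMod p := (x - u + 2*a) * 2⁻¹ with hvdef
      have h2v : 2 * v = x - u + 2*a := by
        rw [hvdef, mul_comm, mul_assoc, inv_mul_cancel₀ h2ne, mul_one]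
      have e1 := hhom (F u) (F v)
      have e2 := hhom (F u') (F v)
      rw [hF] at e1 e2
      have : Prod.map f f (F (2*a - v), F (u + 2*v - 2*a))
          = Prod.map f f (F (2*a - v), F (u' + 2*v - 2*a)) := by
        rw [e1, e2]
        show s (g u, g v) = s (g u', g v)
        rw [hguu']
      have h2nd : g (u + 2*v - 2*a) = g (u' + 2*v - 2*a) :=
        congrArg Prod.snd this
      have ex : u + 2*v - 2*a = x := by rw [h2v]; ring
      have ex' : u' + 2*v - 2*a = x + d := by rw [h2v, hddef]; ring
      rw [ex, ex'] at h2nd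
      exact h2nd
    have hiter : ∀ n : ℕ, ∀ x : ZMod p, g x = g (x + n * d) := by
      intro n
      induction n with
      | zero => intro x; simp
      | succ n ih =>
        intro x
        rw [ih x, hstep (x + n * d)]
        congr 1
        push_cast
        ring
    have hgconst : ∀ v w : ZMod p, g v = g w := by
      intro v w
      have := hiter ((w - v) * d⁻¹).val v
      have hcast : ((((w - v) * d⁻¹).val : ℕ) : ZMod p) = (w - v) * d⁻¹ :=
        ZMod.natCast_rightInverse _
      rw [hcast] at this
      have : g v = g (v + (w - v) * d⁻¹ * d) := this
      rwa [mul_assoc, inv_mul_cancel₀ hd, mul_one, add_sub_cancel] at this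
    have hfconst : ∀ x x' : Reflections p, f x = f x' := by
      intro x x'
      obtain ⟨i, rfl⟩ := hFsurj x
      obtain ⟨i', rfl⟩ := hFsurj x'
      exact hgconst i i'
    haveI : Subsingleton Y := by
      constructor
      intro y y'
      obtain ⟨x, rfl⟩ := hfsurj y
      obtain ⟨x', rfl⟩ := hfsurj y'
      exact hfconst x x'
    haveI : Nonempty Y := ⟨f c⟩
    exact Nat.card_eq_one_iff_unique.mpr ⟨‹_›, ‹_›⟩
  · -- cardinality
    exact (Nat.card_eq_of_bijective F ⟨hFinj, hFsurj⟩).symm.trans (Nat.card_zmod p)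
end

section
/- Let G be a group, V a normal subgroup of G, and x ∈ G such that V ∩ ⟨x⟩ = {1} and G is generated by the set {v·x·v⁻¹ : v ∈ V} (the V-conjugates of x). Then V is generated by the set of commutators {v·x·v⁻¹·x⁻¹ : v ∈ V}. -/
open scoped Pointwise


/-- If `V` is a normal subgroup of `G`, `x ∈ G` satisfies `V ∩ ⟨x⟩ = 1`, and
`G` is generated by the `V`-conjugates of `x`, then `V` is generated by the commutators
`v x v⁻¹ x⁻¹` with `v ∈ V`. -/
theorem stmt_18 {G : Type} [Group G] (V : Subgroup G) (hV : V.Normal) (x : G)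
    (h1 : V ⊓ Subgroup.zpowers x = ⊥)
    (h2 : Subgroup.closure {g : G | ∃ v ∈ V, g = v * x * v⁻¹} = ⊤) :
    Subgroup.closure {g : G | ∃ v ∈ V, g = v * x * v⁻¹ * x⁻¹} = V := by
  set S : Set G := {g : G | ∃ v ∈ V, g = v * x * v⁻¹ * x⁻¹} with hS
  set W := Subgroup.closure S with hW
  have hgen : ∀ v ∈ V, v * x * v⁻¹ * x⁻¹ ∈ W :=
    fun v hv => Subgroup.subset_closure ⟨v, hv, rfl⟩
  have hWV : W ≤ V := by
    rw [hW, Subgroup.closure_le]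
    rintro g ⟨v, hv, rfl⟩
    have h3 : x * v⁻¹ * x⁻¹ ∈ V := hV.conj_mem v⁻¹ (V.inv_mem hv) x
    have h4 : v * x * v⁻¹ * x⁻¹ = v * (x * v⁻¹ * x⁻¹) := by group
    show v * x * v⁻¹ * x⁻¹ ∈ V
    rw [h4]; exact V.mul_mem hv h3
  -- conjugation by elements of V preserves W
  have hconjV : ∀ v ∈ V, ∀ w ∈ W, v * w * v⁻¹ ∈ W := by
    intro v hv w hw
    induction hw using Subgroup.closure_induction with
    | mem g hg =>
        obtain ⟨u, hu, rfl⟩ := hg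
        have key : v * (u * x * u⁻¹ * x⁻¹) * v⁻¹ =
            ((v * u) * x * (v * u)⁻¹ * x⁻¹) * (v * x * v⁻¹ * x⁻¹)⁻¹ := by group
        rw [key]
        exact W.mul_mem (hgen _ (V.mul_mem hv hu)) (W.inv_mem (hgen _ hv))
    | one => simpa using W.one_mem
    | mul a b ha hb iha ihb =>
        have : v * (a * b) * v⁻¹ = (v * a * v⁻¹) * (v * b * v⁻¹) := by group
        rw [this]; exact W.mul_mem iha ihb
    | inv a ha iha =>
        have : v * a⁻¹ * v⁻¹ = (v * a * v⁻¹)⁻¹ := by group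
        rw [this]; exact W.inv_mem iha
  -- conjugation by x preserves W
  have hconjx : ∀ w ∈ W, x * w * x⁻¹ ∈ W := by
    intro w hw
    induction hw using Subgroup.closure_induction with
    | mem g hg =>
        obtain ⟨u, hu, rfl⟩ := hg
        have key : x * (u * x * u⁻¹ * x⁻¹) * x⁻¹ =
            (x * u * x⁻¹) * x * (x * u * x⁻¹)⁻¹ * x⁻¹ := by group
        rw [key]
        exact hgen _ (hV.conj_mem u hu x)
    | one => simpa using W.one_mem
    | mul a b ha hb iha ihb =>
        have : x * (a * b) * x⁻¹ = (x * a * x⁻¹) * (x * b * x⁻¹) := by group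
        rw [this]; exact W.mul_mem iha ihb
    | inv a ha iha =>
        have : x * a⁻¹ * x⁻¹ = (x * a * x⁻¹)⁻¹ := by group
        rw [this]; exact W.inv_mem iha
  have hconjx' : ∀ w ∈ W, x⁻¹ * w * x ∈ W := by
    intro w hw
    induction hw using Subgroup.closure_induction with
    | mem g hg =>
        obtain ⟨u, hu, rfl⟩ := hg
        have key : x⁻¹ * (u * x * u⁻¹ * x⁻¹) * x =
            (x⁻¹ * u * x) * x * (x⁻¹ * u * x)⁻¹ * x⁻¹ := by group
        rw [key]
        exact hgen _ (by simpa using hV.conj_mem u hu x⁻¹)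
    | one => simpa using W.one_mem
    | mul a b ha hb iha ihb =>
        have : x⁻¹ * (a * b) * x = (x⁻¹ * a * x) * (x⁻¹ * b * x) := by group
        rw [this]; exact W.mul_mem iha ihb
    | inv a ha iha =>
        have : x⁻¹ * a⁻¹ * x = (x⁻¹ * a * x)⁻¹ := by group
        rw [this]; exact W.inv_mem iha
  -- W is normal
  have memN : ∀ h : G, (∀ w ∈ W, h * w * h⁻¹ ∈ W) → (∀ w ∈ W, h⁻¹ * w * h ∈ W) →
      h ∈ (Subgroup.normalizer (W : Set G)) := by
    intro h H1 H2
    rw [Subgroup.mem_normalizer_iff]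
    intro g
    constructor
    · exact H1 g
    · intro hg
      have := H2 _ hg
      have hgeq : g = h⁻¹ * (h * g * h⁻¹) * h := by group
      rw [hgeq]; exact this
  have hVN : ∀ v ∈ V, v ∈ (Subgroup.normalizer (W : Set G)) := by
    intro v hv
    exact memN v (hconjV v hv) (by
      intro w hw
      have := hconjV v⁻¹ (V.inv_mem hv) w hw
      simpa using this)
  have hxN : x ∈ (Subgroup.normalizer (W : Set G)) := memN x hconjx hconjx'
  have hNtop : (Subgroup.normalizer (W : Set G)) = ⊤ := by
    rw [eq_top_iff, ← h2, Subgroup.closure_le]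
    rintro g ⟨v, hv, rfl⟩
    exact (Subgroup.normalizer (W : Set G)).mul_mem ((Subgroup.normalizer (W : Set G)).mul_mem (hVN v hv) hxN)
      ((Subgroup.normalizer (W : Set G)).inv_mem (hVN v hv))
  have hWnormal : W.Normal := Subgroup.normalizer_eq_top_iff.mp hNtop
  -- G = W ⊔ zpowers x
  have htop : W ⊔ Subgroup.zpowers x = ⊤ := by
    rw [eq_top_iff, ← h2, Subgroup.closure_le]
    rintro g ⟨v, hv, rfl⟩
    have : v * x * v⁻¹ = (v * x * v⁻¹ * x⁻¹) * x := by group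
    rw [this]
    exact Subgroup.mul_mem _ (Subgroup.mem_sup_left (hgen v hv))
      (Subgroup.mem_sup_right (Subgroup.mem_zpowers x))
  -- V ≤ W
  have hVW : V ≤ W := by
    haveI := hWnormal
    intro u hu
    have hu' : u ∈ W ⊔ Subgroup.zpowers x := htop ▸ Subgroup.mem_top u
    have hset : (↑(W ⊔ Subgroup.zpowers x) : Set G) =
        (W : Set G) * (Subgroup.zpowers x : Set G) :=
      Subgroup.normal_mul W (Subgroup.zpowers x)
    have hu'' : u ∈ (W : Set G) * (Subgroup.zpowers x : Set G) := by
      rw [← hset]; exact hu'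
    obtain ⟨w, hw, y, hy, rfl⟩ := hu''
    have hyV : y ∈ V := by
      have : y = w⁻¹ * (w * y) := by group
      rw [this]; exact V.mul_mem (V.inv_mem (hWV hw)) hu
    have hy1 : y = 1 := by
      have : y ∈ V ⊓ Subgroup.zpowers x := ⟨hyV, hy⟩
      rw [h1] at this; exact this
    rw [hy1]; simpa using hw
  exact le_antisymm hWV hVW
end

section
/- Let (X,r) be a finite non-degenerate set-theoretic solution of the Yang–Baxter equation whose diagonal map q is bijective. Then for all y, z ∈ X, any two of the three equalities λ_y = λ_z, ρ_y = ρ_z, σ_y = σ_z imply the third. In particular, if λ_y = λ_z and ρ_y = ρ_z then σ_y = σ_z. -/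
/-- For a finite non-degenerate solution with bijective diagonal map, any two
of the equalities `λ_y = λ_z`, `ρ_y = ρ_z`, `σ_y = σ_z` imply the third. -/
theorem stmt_19 {X : Type} [Fintype X] [Nonempty X]
    (r : X × X → X × X) (hBr : IsBraided r) (hNd : Nondegenerate r)
    (hq : Function.Bijective (diagMap r)) :
    ∀ y z : X,
      (lambdaMap r y = lambdaMap r z → rhoMap r y = rhoMap r z →
        sigmaMap r y = sigmaMap r z) ∧
      (lambdaMap r y = lambdaMap r z → sigmaMap r y = sigmaMap r z →
        rhoMap r y = rhoMap r z) ∧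
      (rhoMap r y = rhoMap r z → sigmaMap r y = sigmaMap r z →
        lambdaMap r y = lambdaMap r z) := by
  -- `λ_t (q t) = t`
  have hlq : ∀ t : X, lambdaMap r t (diagMap r t) = t := fun t =>
    Function.invFun_eq ((hNd.1 t).2 t)
  -- uniqueness characterization of `q`
  have hqu : ∀ w s : X, lambdaMap r w s = w → s = diagMap r w := fun w s h =>
    (hNd.1 w).1 (h.trans (hlq w).symm)
  -- the first two component identities of the braid relation
  have key : ∀ x y z : X,
      lambdaMap r (lambdaMap r x y) (lambdaMap r (rhoMap r y x) z)
        = lambdaMap r x (lambdaMap r y z) ∧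
      rhoMap r (lambdaMap r (rhoMap r y x) z) (lambdaMap r x y)
        = lambdaMap r (rhoMap r (lambdaMap r y z) x) (rhoMap r z y) := by
    intro x y z
    have h := congrFun hBr (x, y, z)
    simp only [Function.comp_apply, r12, r23, Prod.mk.injEq, lambdaMap, rhoMap] at h ⊢
    exact ⟨h.1, congrArg Prod.fst h.2⟩
  -- `λ_{ρ_{q t} t} = λ_{q t}`
  have hstep2 : ∀ t : X, lambdaMap r (rhoMap r (diagMap r t) t) = lambdaMap r (diagMap r t) := by
    intro t
    funext z
    have h := (key t (diagMap r t) z).1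
    rw [hlq t] at h
    exact (hNd.1 t).1 h
  -- `ρ_{λ_{q t}⁻¹ y} (q t) = q (ρ_y t)`
  have hstep3 : ∀ y t : X,
      rhoMap r (Function.invFun (lambdaMap r (diagMap r t)) y) (diagMap r t)
        = diagMap r (rhoMap r y t) := by
    intro y t
    have hay : lambdaMap r (diagMap r t) (Function.invFun (lambdaMap r (diagMap r t)) y) = y :=
      Function.invFun_eq ((hNd.1 _).2 y)
    have h := (key t (diagMap r t) (Function.invFun (lambdaMap r (diagMap r t)) y)).2
    rw [hstep2 t, hay, hlq t] at h
    exact hqu _ _ h.symm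
  -- `σ_y (q t) = λ_y (q (ρ_y t))`
  have hstep4 : ∀ y t : X,
      sigmaMap r y (diagMap r t) = lambdaMap r y (diagMap r (rhoMap r y t)) := by
    intro y t
    unfold sigmaMap
    rw [hstep3 y t]
  intro y z
  refine ⟨?_, ?_, ?_⟩
  · intro hL hR
    funext x
    obtain ⟨t, rfl⟩ := hq.2 x
    rw [hstep4, hstep4, hL, hR]
  · intro hL hS
    funext t
    have h := congrFun hS (diagMap r t)
    rw [hstep4, hstep4, hL] at h
    exact hq.1 ((hNd.1 z).1 h)
  · intro hR hS
    funext w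
    obtain ⟨u, rfl⟩ := hq.2 w
    obtain ⟨t, rfl⟩ := (hNd.2 y).2 u
    calc lambdaMap r y (diagMap r (rhoMap r y t)) = sigmaMap r y (diagMap r t) :=
          (hstep4 y t).symm
      _ = sigmaMap r z (diagMap r t) := congrFun hS _
      _ = lambdaMap r z (diagMap r (rhoMap r z t)) := hstep4 z t
      _ = lambdaMap r z (diagMap r (rhoMap r y t)) := by rw [hR]
end
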